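/- arXiv:1105.2736 — 4 statements merged into one kernel-verified Lean document; each statement's English description precedes it below -/
import Mathlib

section
/- Let γ : ℝ → ℝ³ be a C² curve with |γ'(s)| = 1 for all s ∈ ℝ, and let r > 0 satisfy |γ''(s)| ≤ 1/r for all s ∈ ℝ. Let s₀ ∈ ℝ and x₀ ∈ ℝ³ be such that |x₀ − γ(s₀)| < r/8. Then there exists a unique ξ₀ ∈ (s₀ − r/4, s₀ + r/4) such that (x₀ − γ(ξ₀)) · γ'(ξ₀) = 0. -/
/-!
Put `g ξ = ⟪x₀ - γ ξ, γ' ξ⟫`, so that `g' = ⟪x₀ - γ, γ''⟫ - 1`. Since `γ` is 1-Lipschitz,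
`‖x₀ - γ ξ‖ ≤ r/8 + r/4` for `|ξ - s₀| ≤ r/4`, and the curvature bound gives `g' ≤ 3/8 - 1`
there. So `g` decreases strictly, by at least `(5/8)(r/4) > r/8 > |g s₀|` on either half of the
interval, hence has exactly one zero in it.
-/

noncomputable section
open Real MeasureTheory

abbrev R3 : Type := EuclideanSpace ℝ (Fin 3)

open Set

theorem existsUnique_mem_Ioo_eq_zero_of_hasDerivAt_le_neg {g g' : ℝ → ℝ} {s₀ δ c : ℝ}
    (hc : 0 < c) (hg : ∀ x ∈ Icc (s₀ - δ) (s₀ + δ), HasDerivAt g (g' x) x)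
    (hg' : ∀ x ∈ Icc (s₀ - δ) (s₀ + δ), g' x ≤ -c) (hgs₀ : |g s₀| < c * δ) :
    ∃! x, x ∈ Ioo (s₀ - δ) (s₀ + δ) ∧ g x = 0 := by
  have hδ : 0 < δ := pos_of_mul_pos_right ((abs_nonneg _).trans_lt hgs₀) hc.le
  have hs₀ : s₀ ∈ Icc (s₀ - δ) (s₀ + δ) := ⟨by linarith, by linarith⟩
  have hcont : ContinuousOn g (Icc (s₀ - δ) (s₀ + δ)) :=
    fun x hx => (hg x hx).continuousAt.continuousWithinAt
  have hdiff : DifferentiableOn ℝ g (interior (Icc (s₀ - δ) (s₀ + δ))) := fun x hx =>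
    (hg x (interior_subset hx)).differentiableAt.differentiableWithinAt
  have hderiv : ∀ x ∈ interior (Icc (s₀ - δ) (s₀ + δ)), deriv g x ≤ -c := fun x hx => by
    rw [(hg x (interior_subset hx)).deriv]
    exact hg' x (interior_subset hx)
  have hanti : StrictAntiOn g (Icc (s₀ - δ) (s₀ + δ)) :=
    strictAntiOn_of_deriv_neg (convex_Icc _ _) hcont fun x hx =>
      (hderiv x hx).trans_lt (by linarith)
  have hdrop := (convex_Icc _ _).image_sub_le_mul_sub_of_deriv_le hcont hdiff hderiv
  have hright := hdrop s₀ hs₀ (s₀ + δ) (right_mem_Icc.2 (by linarith)) (by linarith)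
  have hleft := hdrop (s₀ - δ) (left_mem_Icc.2 (by linarith)) s₀ hs₀ (by linarith)
  obtain ⟨x, hx, hgx⟩ := intermediate_value_Ioo' (by linarith : s₀ - δ ≤ s₀ + δ) hcont
    (show (0 : ℝ) ∈ Ioo _ _ from
      ⟨by nlinarith [le_abs_self (g s₀)], by nlinarith [neg_abs_le (g s₀)]⟩)
  exact ⟨x, ⟨hx, hgx⟩, fun y ⟨hy, hgy⟩ =>
    hanti.injOn (Ioo_subset_Icc_self hy) (Ioo_subset_Icc_self hx) (hgy.trans hgx.symm)⟩

section Curve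

variable {E : Type*} [NormedAddCommGroup E] [InnerProductSpace ℝ E] {γ : ℝ → E}

theorem hasDerivAt_inner_sub_deriv (x₀ : E) {ξ : ℝ} (hγ : DifferentiableAt ℝ γ ξ)
    (hγ' : DifferentiableAt ℝ (deriv γ) ξ) :
    HasDerivAt (fun s => inner ℝ (x₀ - γ s) (deriv γ s))
      (inner ℝ (x₀ - γ ξ) (deriv (deriv γ) ξ) - ‖deriv γ ξ‖ ^ 2) ξ := by
  have h := (hγ.hasDerivAt.const_sub x₀).inner ℝ hγ'.hasDerivAt
  rwa [inner_neg_left, real_inner_self_eq_norm_sq, ← sub_eq_add_neg] at h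

theorem lipschitzWith_one_of_norm_deriv_eq_one (hγ : Differentiable ℝ γ)
    (harc : ∀ s, ‖deriv γ s‖ = 1) : LipschitzWith 1 γ :=
  lipschitzWith_of_nnnorm_deriv_le hγ fun s => by
    rw [← NNReal.coe_le_coe, coe_nnnorm, harc, NNReal.coe_one]

end Curve

/-- Lemma 3.4, existence and uniqueness of the local orthogonal
projection parameter. -/
theorem stmt0
    (γ : ℝ → R3) (hγ : ContDiff ℝ 2 γ)
    (harc : ∀ s : ℝ, ‖deriv γ s‖ = 1)
    (r : ℝ) (hr : 0 < r)
    (hcurv : ∀ s : ℝ, ‖deriv (deriv γ) s‖ ≤ 1 / r)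
    (s₀ : ℝ) (x₀ : R3) (hx₀ : ‖x₀ - γ s₀‖ < r / 8) :
    ∃! ξ₀ : ℝ, ξ₀ ∈ Set.Ioo (s₀ - r / 4) (s₀ + r / 4) ∧
      (inner ℝ (x₀ - γ ξ₀) (deriv γ ξ₀) : ℝ) = 0 := by
  have hγ₁ : Differentiable ℝ γ := hγ.differentiable (by norm_num)
  have hlip := lipschitzWith_one_of_norm_deriv_eq_one hγ₁ harc
  refine existsUnique_mem_Ioo_eq_zero_of_hasDerivAt_le_neg (c := 5 / 8) (by norm_num)
    (fun ξ _ => hasDerivAt_inner_sub_deriv x₀ (hγ₁ ξ) (hγ.differentiable_deriv_two ξ))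
    (fun ξ hξ => ?_) ?_
  · obtain ⟨hξl, hξr⟩ := hξ
    have hdist : ‖x₀ - γ ξ‖ ≤ 3 * r / 8 := calc
        ‖x₀ - γ ξ‖ ≤ ‖x₀ - γ s₀‖ + ‖γ s₀ - γ ξ‖ := norm_sub_le_norm_sub_add_norm_sub _ _ _
        _ ≤ r / 8 + |s₀ - ξ| := by
          simpa [dist_eq_norm, Real.dist_eq] using add_le_add hx₀.le (hlip.dist_le_mul s₀ ξ)
        _ ≤ 3 * r / 8 := by
          linarith [(abs_sub_le_iff.2 ⟨by linarith, by linarith⟩ : |s₀ - ξ| ≤ r / 4)]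
    have hcurvature : inner ℝ (x₀ - γ ξ) (deriv (deriv γ) ξ) ≤ 3 / 8 := calc
      _ ≤ ‖x₀ - γ ξ‖ * ‖deriv (deriv γ) ξ‖ := real_inner_le_norm _ _
      _ ≤ 3 * r / 8 * (1 / r) := mul_le_mul hdist (hcurv ξ) (norm_nonneg _) (by positivity)
      _ = 3 / 8 := by field_simp
    rw [harc]
    linarith
  · calc |inner ℝ (x₀ - γ s₀) (deriv γ s₀)| ≤ ‖x₀ - γ s₀‖ * ‖deriv γ s₀‖ :=
          abs_real_inner_le_norm _ _
      _ < 5 / 8 * (r / 4) := by rw [harc, mul_one]; linarith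
end
end

section
/- Let γ : ℝ → ℝ³ be a C² curve with |γ'(s)| = 1 for all s ∈ ℝ, and let r > 0 satisfy |γ''(s)| ≤ 1/r for all s ∈ ℝ. Let Ξ := {(s,x) ∈ ℝ × ℝ³ : |x − γ(s)| < r/8}, and let ξ : Ξ → ℝ be the function assigning to each (s,x) ∈ Ξ the unique value ξ(s,x) ∈ (s − r/4, s + r/4) with (x − γ(ξ(s,x))) · γ'(ξ(s,x)) = 0. Then: (i) ξ is C¹ on the open set Ξ; (ii) ∂ₛξ(s,x) = 0 for every (s,x) ∈ Ξ; (iii) the differential of ξ in x is Dₓξ(s,x) = (1 + q/(1 − q)) γ'(ξ(s,x)), where q := (x − γ(ξ(s,x))) · γ''(ξ(s,x)); (iv) if moreover γ(s+ℓ) = γ(s) + a for all s (for some ℓ > 0 and a ∈ ℝ³), then (s+ℓ, x+a) ∈ Ξ and ξ(s+ℓ, x+a) = ξ(s,x) + ℓ whenever (s,x) ∈ Ξ. -/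
/-!
Near a point `(s, x)` of the tube, `ξ` solves `⟪x - γ z, γ' z⟫ = 0` in `z`, an equation whose
`z`-derivative is `q - 1`, where `q = ⟪x - γ z, γ'' z⟫` satisfies `q ≤ |x - γ z| / r < 3/8` because
`γ` is 1-Lipschitz. The implicit function theorem therefore gives a `C¹` local solution, and it
coincides with `ξ` because solutions in the window `|z - s| < r/4` are unique. The equation does not
involve `s`, so `ξ` is locally constant in `s`; differentiating it along `x + t v` gives
`⟪v, γ'⟫ + (q - 1) Dₓξ v = 0`. Quasiperiodicity makes `γ'` periodic, so `ξ p + ℓ` solves the shifted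
equation in the shifted window.
-/

noncomputable section
open Real MeasureTheory

open Topology Filter Set
open scoped RealInnerProductSpace

section Implicit

variable {𝕜 : Type*} [RCLike 𝕜] {E : Type*} [NormedAddCommGroup E] [NormedSpace 𝕜 E]
  [CompleteSpace E]

theorem ContinuousLinearMap.isInvertible_smulRight_one {c : 𝕜} (hc : c ≠ 0) :
    ((1 : 𝕜 →L[𝕜] 𝕜).smulRight c).IsInvertible :=
  ⟨ContinuousLinearEquiv.unitsEquivAut 𝕜 (Units.mk0 c hc), by ext; simp⟩

theorem contDiffAt_of_eventually_unique_zero {f : E × 𝕜 → 𝕜} {ξ : E → 𝕜} {x : E}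
    {n : WithTop ℕ∞} {c : 𝕜} (hf : ContDiffAt 𝕜 n f (x, ξ x)) (hn : n ≠ 0)
    (hc : HasDerivAt (fun z => f (x, z)) c (ξ x)) (hc0 : c ≠ 0)
    (huniq : ∀ᶠ v in 𝓝 (x, ξ x), f v = f (x, ξ x) → ξ v.1 = v.2) :
    ContDiffAt 𝕜 n ξ x := by
  have hpartial : fderiv 𝕜 f (x, ξ x) ∘L .inr 𝕜 E 𝕜 = (1 : 𝕜 →L[𝕜] 𝕜).smulRight c :=
    (((hf.differentiableAt hn).hasFDerivAt.comp (ξ x)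
      (hasFDerivAt_prodMk_right x (ξ x)))).unique hc.hasFDerivAt
  have hinv := hpartial ▸ ContinuousLinearMap.isInvertible_smulRight_one hc0
  set ψ := hf.implicitFunction hn hinv
  have hψ : ContDiffAt 𝕜 n ψ x := hf.contDiffAt_implicitFunction hn hinv
  have hψgraph : Tendsto (fun y => (y, ψ y)) (𝓝 x) (𝓝 (x, ξ x)) := by
    have := (continuousAt_id.prodMk hψ.continuousAt).tendsto
    rwa [show ψ x = ξ x from hf.implicitFunction_apply_self hn hinv] at this
  refine hψ.congr_of_eventuallyEq ?_
  filter_upwards [hf.eventually_apply_implicitFunction hn hinv, hψgraph.eventually huniq]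
    with y hy hy' using hy' hy

end Implicit

section Curve

variable {E : Type*} [NormedAddCommGroup E] {γ : ℝ → E}

def tube (γ : ℝ → E) (ρ : ℝ) : Set (ℝ × E) := {p | ‖p.2 - γ p.1‖ < ρ}

theorem isOpen_tube (hγ : Continuous γ) (ρ : ℝ) : IsOpen (tube γ ρ) :=
  isOpen_lt (continuous_snd.sub (hγ.comp continuous_fst)).norm continuous_const

theorem norm_sub_lt_of_mem_tube [NormedSpace ℝ E] (hγ : Differentiable ℝ γ)
    (harc : ∀ s, ‖deriv γ s‖ ≤ 1) {ρ δ z : ℝ} {p : ℝ × E} (hp : p ∈ tube γ ρ)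
    (hz : z ∈ Ioo (p.1 - δ) (p.1 + δ)) :
    ‖p.2 - γ z‖ < ρ + δ := by
  have hlip : ‖γ p.1 - γ z‖ ≤ |p.1 - z| := by
    simpa [dist_eq_norm, Real.dist_eq] using
      (lipschitzWith_of_nnnorm_deriv_le (C := 1) hγ fun s => by
        rw [← NNReal.coe_le_coe]; exact harc s).dist_le_mul p.1 z
  have hz' : |p.1 - z| < δ := abs_sub_lt_iff.mpr ⟨by linarith [hz.1], by linarith [hz.2]⟩
  calc ‖p.2 - γ z‖ ≤ ‖p.2 - γ p.1‖ + ‖γ p.1 - γ z‖ := norm_sub_le_norm_sub_add_norm_sub _ _ _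
    _ < ρ + δ := add_lt_add_of_lt_of_le hp (hlip.trans hz'.le)

variable [InnerProductSpace ℝ E]

def tangentComponent (γ : ℝ → E) (x : E) (z : ℝ) : ℝ := ⟪x - γ z, deriv γ z⟫

theorem contDiff_one_deriv (hγ : ContDiff ℝ 2 γ) : ContDiff ℝ 1 (deriv γ) :=
  (contDiff_succ_iff_deriv.mp hγ).2.2

theorem contDiff_tangentComponent (hγ : ContDiff ℝ 2 γ) :
    ContDiff ℝ 1 (fun v : E × ℝ => tangentComponent γ v.1 v.2) :=
  (contDiff_fst.sub ((hγ.of_le (by norm_num)).comp contDiff_snd)).inner ℝ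
    ((contDiff_one_deriv hγ).comp contDiff_snd)

theorem hasDerivAt_tangentComponent (hγ : ContDiff ℝ 2 γ) {c : ℝ → E} {φ : ℝ → ℝ}
    {v : E} {d t : ℝ} (hc : HasDerivAt c v t) (hφ : HasDerivAt φ d t)
    (harc : ‖deriv γ (φ t)‖ = 1) :
    HasDerivAt (fun t => tangentComponent γ (c t) (φ t))
      (⟪v, deriv γ (φ t)⟫ + d * (⟪c t - γ (φ t), deriv (deriv γ) (φ t)⟫ - 1)) t := by
  have hγ' : HasDerivAt γ (deriv γ (φ t)) (φ t) :=
    (hγ.differentiable (by norm_num) _).hasDerivAt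
  have hγ'' : HasDerivAt (deriv γ) (deriv (deriv γ) (φ t)) (φ t) :=
    ((contDiff_one_deriv hγ).differentiable one_ne_zero _).hasDerivAt
  refine ((hc.sub (hγ'.scomp t hφ)).inner ℝ (hγ''.scomp t hφ)).congr_deriv ?_
  simp only [Pi.sub_apply, Function.comp_apply, inner_sub_left, real_inner_smul_left,
    real_inner_smul_right, real_inner_self_eq_norm_sq, harc]
  ring

theorem inner_deriv_deriv_lt_one {r : ℝ} (hr : 0 < r)
    (hcurv : ∀ s, ‖deriv (deriv γ) s‖ ≤ 1 / r) {x : E} {z : ℝ} (hx : ‖x - γ z‖ < r) :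
    ⟪x - γ z, deriv (deriv γ) z⟫ < 1 :=
  calc ⟪x - γ z, deriv (deriv γ) z⟫ ≤ ‖x - γ z‖ * ‖deriv (deriv γ) z‖ := real_inner_le_norm _ _
    _ ≤ ‖x - γ z‖ * (1 / r) := by gcongr; exact hcurv z
    _ < r * (1 / r) := by gcongr
    _ = 1 := by field_simp

theorem eventually_eq_of_tangentComponent_eq_zero (hγ : Continuous γ) {ρ δ : ℝ}
    {ξ : ℝ × E → ℝ} (hξ : ∀ p ∈ tube γ ρ, ξ p ∈ Ioo (p.1 - δ) (p.1 + δ))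
    (hξuniq : ∀ p ∈ tube γ ρ, ∀ z ∈ Ioo (p.1 - δ) (p.1 + δ),
      tangentComponent γ p.2 z = 0 → z = ξ p)
    {p : ℝ × E} (hp : p ∈ tube γ ρ) :
    ∀ᶠ v in 𝓝 (p, ξ p), tangentComponent γ v.1.2 v.2 = 0 → ξ v.1 = v.2 := by
  have hmem : ∀ᶠ v in 𝓝 (p, ξ p), v.1 ∈ tube γ ρ :=
    continuousAt_fst.preimage_mem_nhds ((isOpen_tube hγ ρ).mem_nhds hp)
  have hlow : ∀ᶠ v : (ℝ × E) × ℝ in 𝓝 (p, ξ p), v.1.1 - δ < v.2 :=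
    ContinuousAt.eventually_lt (by fun_prop) (by fun_prop) (hξ p hp).1
  have hupp : ∀ᶠ v : (ℝ × E) × ℝ in 𝓝 (p, ξ p), v.2 < v.1.1 + δ :=
    ContinuousAt.eventually_lt (by fun_prop) (by fun_prop) (hξ p hp).2
  filter_upwards [hmem, hlow, hupp] with v hv hl hu hzero
  exact (hξuniq v.1 hv v.2 ⟨hl, hu⟩ hzero).symm

theorem deriv_foot_fst {ξ : ℝ × E → ℝ} {p : ℝ × E}
    (hgraph : ∀ᶠ v in 𝓝 (p, ξ p), tangentComponent γ v.1.2 v.2 = 0 → ξ v.1 = v.2)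
    (hfoot : tangentComponent γ p.2 (ξ p) = 0) :
    deriv (fun s => ξ (s, p.2)) p.1 = 0 := by
  -- `ξ p` stays a solution in the window of every nearby `s`, so `ξ (·, p.2)` is locally constant
  have hline : Tendsto (fun s => ((s, p.2), ξ p)) (𝓝 p.1) (𝓝 (p, ξ p)) :=
    ((continuous_id.prodMk continuous_const).prodMk continuous_const).tendsto' _ _ rfl
  have hconst : (fun s => ξ (s, p.2)) =ᶠ[𝓝 p.1] fun _ => ξ p :=
    (hline.eventually hgraph).mono fun s hs => hs hfoot
  rw [hconst.deriv_eq, deriv_const]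

theorem contDiffAt_foot [CompleteSpace E] (hγ : ContDiff ℝ 2 γ) {ξ : ℝ × E → ℝ} {p : ℝ × E}
    (harc : ‖deriv γ (ξ p)‖ = 1) (hq : ⟪p.2 - γ (ξ p), deriv (deriv γ) (ξ p)⟫ ≠ 1)
    (hgraph : ∀ᶠ v in 𝓝 (p, ξ p), tangentComponent γ v.1.2 v.2 = 0 → ξ v.1 = v.2)
    (hfoot : tangentComponent γ p.2 (ξ p) = 0) :
    ContDiffAt ℝ 1 ξ p := by
  have hpartial := hasDerivAt_tangentComponent hγ (hasDerivAt_const (ξ p) p.2)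
    (hasDerivAt_id (ξ p)) harc
  have hC1 : ContDiff ℝ 1 fun v : (ℝ × E) × ℝ => tangentComponent γ v.1.2 v.2 :=
    (contDiff_tangentComponent hγ).comp ((contDiff_snd.comp contDiff_fst).prodMk contDiff_snd)
  refine contDiffAt_of_eventually_unique_zero hC1.contDiffAt one_ne_zero hpartial
    (by simpa [sub_eq_zero] using hq) ?_
  simpa only [hfoot] using hgraph

theorem fderiv_foot_snd_apply (hγ : ContDiff ℝ 2 γ) {ξ : ℝ × E → ℝ} {p : ℝ × E}
    (harc : ‖deriv γ (ξ p)‖ = 1) (hq : ⟪p.2 - γ (ξ p), deriv (deriv γ) (ξ p)⟫ ≠ 1)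
    (hdiff : DifferentiableAt ℝ ξ p)
    (hsol : ∀ᶠ p' in 𝓝 p, tangentComponent γ p'.2 (ξ p') = 0) (v : E) :
    fderiv ℝ (fun x => ξ (p.1, x)) p.2 v =
      ⟪deriv γ (ξ p), v⟫ / (1 - ⟪p.2 - γ (ξ p), deriv (deriv γ) (ξ p)⟫) := by
  set L := fderiv ℝ (fun x => ξ (p.1, x)) p.2
  have hline : HasDerivAt (fun t : ℝ => p.2 + t • v) v 0 := by
    simpa using ((hasDerivAt_id (0 : ℝ)).smul_const v).const_add p.2
  have hξline : HasDerivAt (fun t : ℝ => ξ (p.1, p.2 + t • v)) (L v) 0 := by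
    have hslice : DifferentiableAt ℝ (fun x => ξ (p.1, x)) p.2 :=
      hdiff.comp p.2 (differentiableAt_const p.1 |>.prodMk differentiableAt_id)
    exact hslice.hasFDerivAt.comp_hasDerivAt_of_eq (0 : ℝ) hline (by simp)
  have hderiv := hasDerivAt_tangentComponent hγ hline hξline (by simpa using harc)
  have hzero : HasDerivAt (fun t : ℝ => tangentComponent γ (p.2 + t • v) (ξ (p.1, p.2 + t • v)))
      0 0 := by
    refine (hasDerivAt_const (0 : ℝ) (0 : ℝ)).congr_of_eventuallyEq ?_
    have hcont : Tendsto (fun t : ℝ => (p.1, p.2 + t • v)) (𝓝 0) (𝓝 p) :=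
      (continuous_const.prodMk (continuous_const.add (continuous_id.smul continuous_const))
        ).tendsto' _ _ (by simp)
    exact hcont.eventually hsol
  have := hderiv.unique hzero
  simp only [zero_smul, add_zero, Prod.mk.eta] at this
  rw [eq_div_iff (sub_ne_zero.mpr (Ne.symm hq)), real_inner_comm v]
  linarith

theorem deriv_add_of_quasiperiodic {ℓ : ℝ} {a : E} (ha : ∀ s, γ (s + ℓ) = γ s + a) (s : ℝ) :
    deriv γ (s + ℓ) = deriv γ s := by
  rw [← deriv_comp_add_const, funext ha, deriv_add_const]

theorem foot_add_of_quasiperiodic {ρ δ ℓ : ℝ} {a : E} {ξ : ℝ × E → ℝ}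
    (hξ : ∀ p ∈ tube γ ρ, ξ p ∈ Ioo (p.1 - δ) (p.1 + δ) ∧ tangentComponent γ p.2 (ξ p) = 0)
    (hξuniq : ∀ p ∈ tube γ ρ, ∀ z ∈ Ioo (p.1 - δ) (p.1 + δ),
      tangentComponent γ p.2 z = 0 → z = ξ p)
    (ha : ∀ s, γ (s + ℓ) = γ s + a) {p : ℝ × E} (hp : p ∈ tube γ ρ) :
    (p.1 + ℓ, p.2 + a) ∈ tube γ ρ ∧ ξ (p.1 + ℓ, p.2 + a) = ξ p + ℓ := by
  have hshift : ∀ z, p.2 + a - γ (z + ℓ) = p.2 - γ z := fun z => by rw [ha]; abel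
  have hmem : (p.1 + ℓ, p.2 + a) ∈ tube γ ρ := by
    change ‖p.2 + a - γ (p.1 + ℓ)‖ < ρ
    rwa [hshift]
  obtain ⟨⟨hlow, hupp⟩, hfoot⟩ := hξ p hp
  refine ⟨hmem, (hξuniq _ hmem (ξ p + ℓ) ⟨by linarith, by linarith⟩ ?_).symm⟩
  simpa only [tangentComponent, hshift, deriv_add_of_quasiperiodic ha] using hfoot

end Curve

/-- Lemma 3.4, regularity and quasiperiodicity of the projection
parameter function `ξ`. -/
theorem stmt1
    (γ : ℝ → R3) (hγ : ContDiff ℝ 2 γ)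
    (harc : ∀ s : ℝ, ‖deriv γ s‖ = 1)
    (r : ℝ) (hr : 0 < r)
    (hcurv : ∀ s : ℝ, ‖deriv (deriv γ) s‖ ≤ 1 / r)
    (Ξ : Set (ℝ × R3)) (hΞ : Ξ = {p : ℝ × R3 | ‖p.2 - γ p.1‖ < r / 8})
    (ξ : ℝ × R3 → ℝ)
    (hξ : ∀ p ∈ Ξ, ξ p ∈ Set.Ioo (p.1 - r / 4) (p.1 + r / 4) ∧
      (inner ℝ (p.2 - γ (ξ p)) (deriv γ (ξ p)) : ℝ) = 0)
    (hξuniq : ∀ p ∈ Ξ, ∀ z : ℝ, z ∈ Set.Ioo (p.1 - r / 4) (p.1 + r / 4) →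
      (inner ℝ (p.2 - γ z) (deriv γ z) : ℝ) = 0 → z = ξ p) :
    -- (i) `Ξ` is open and `ξ` is C¹ on `Ξ`
    IsOpen Ξ ∧ ContDiffOn ℝ 1 ξ Ξ ∧
    -- (ii) `∂ₛ ξ = 0` on `Ξ`
    (∀ p ∈ Ξ, deriv (fun s : ℝ => ξ (s, p.2)) p.1 = 0) ∧
    -- (iii) `Dₓξ(s,x) = (1 + q/(1-q)) γ'(ξ(s,x))` with
    -- `q = (x - γ(ξ(s,x))) · γ''(ξ(s,x))`
    (∀ p ∈ Ξ, ∀ v : R3,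
      fderiv ℝ (fun x : R3 => ξ (p.1, x)) p.2 v =
        (1 + (inner ℝ (p.2 - γ (ξ p)) (deriv (deriv γ) (ξ p)) : ℝ) /
            (1 - (inner ℝ (p.2 - γ (ξ p)) (deriv (deriv γ) (ξ p)) : ℝ))) *
          (inner ℝ (deriv γ (ξ p)) v : ℝ)) ∧
    -- (iv) quasiperiodicity
    (∀ ℓ : ℝ, 0 < ℓ → ∀ a : R3, (∀ s : ℝ, γ (s + ℓ) = γ s + a) →
      ∀ p ∈ Ξ, (p.1 + ℓ, p.2 + a) ∈ Ξ ∧ ξ (p.1 + ℓ, p.2 + a) = ξ p + ℓ) := by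
  subst hΞ
  have hgraph := fun p (hp : p ∈ tube γ (r / 8)) =>
    eventually_eq_of_tangentComponent_eq_zero hγ.continuous (fun p hp => (hξ p hp).1) hξuniq hp
  have hq : ∀ p ∈ tube γ (r / 8), ⟪p.2 - γ (ξ p), deriv (deriv γ) (ξ p)⟫ ≠ 1 := fun p hp =>
    (inner_deriv_deriv_lt_one hr hcurv <| (norm_sub_lt_of_mem_tube
      (hγ.differentiable (by norm_num)) (fun s => (harc s).le) hp (hξ p hp).1).trans
      (by linarith)).ne
  have hC1 : ∀ p ∈ tube γ (r / 8), ContDiffAt ℝ 1 ξ p := fun p hp =>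
    contDiffAt_foot hγ (harc _) (hq p hp) (hgraph p hp) (hξ p hp).2
  refine ⟨isOpen_tube hγ.continuous _, fun p hp => (hC1 p hp).contDiffWithinAt,
    fun p hp => deriv_foot_fst (hgraph p hp) (hξ p hp).2, fun p hp v => ?_,
    fun ℓ _ a ha p hp => foot_add_of_quasiperiodic hξ hξuniq ha hp⟩
  have hsol : ∀ᶠ p' in 𝓝 p, tangentComponent γ p'.2 (ξ p') = 0 :=
    eventually_of_mem ((isOpen_tube hγ.continuous _).mem_nhds hp) fun p' hp' => (hξ p' hp').2
  rw [fderiv_foot_snd_apply hγ (harc _) (hq p hp) ((hC1 p hp).differentiableAt one_ne_zero)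
    hsol v, one_add_div (sub_ne_zero.mpr (hq p hp).symm)]
  ring
end
end

section
/- Let γ : ℝ → ℝ³ be a C² curve with |γ'| ≡ 1, γ(s+ℓ) = γ(s) + a for all s (ℓ > 0, a ∈ ℝ³), and |γ''(s)| ≤ 1/r for all s with r > 0. Let Γ : ℝ → ℝ³ be Lipschitz with |Γ'(s)| = 1 for a.e. s and Γ(s+L) = Γ(s) + a for all s (L > 0). If σ is a reparametrization of γ for Γ and ρ ≥ sup_{s ∈ ℝ} |Γ(s) − γ(σ(s))|, then (sup_{s ∈ ℝ} |Γ(s) − γ(σ(s))|)² ≤ (√2 ρ + ρ²/L) · F_{γ,σ,ρ}(Γ). -/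
noncomputable section
open Real MeasureTheory

/-- The cut-off function `f_ρ(d²) = max(1 - d²/ρ², 0)`. -/
def fcut (ρ d2 : ℝ) : ℝ := max (1 - d2 / ρ ^ 2) 0

/-- The discrepancy functional
`F_{γ,σ,ρ}(Γ) = ∫₀^L (1 - f_ρ(|Γ(s) - γ(σ(s))|²) (γ'(σ(s)) · Γ'(s))) ds`. -/
def Fdisc (γ Γ : ℝ → R3) (σ : ℝ → ℝ) (ρ L : ℝ) : ℝ :=
  ∫ s in (0:ℝ)..L,
    (1 - fcut ρ (‖Γ s - γ (σ s)‖ ^ 2) * (inner ℝ (deriv γ (σ s)) (deriv Γ s) : ℝ))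

/-!
The normal distance `d(s) = |Γ(s) - γ(σ(s))|` is `L`-periodic. Because `Γ(s) - γ(σ(s))` is
orthogonal to `γ'(σ(s))`, the tangential motion of `σ` drops out of `(d²)' = 2 (Γ - γ∘σ) · Γ'`,
so `|(d²)'| ≤ 2 d √(1 - u²)` with `u = γ'(σ) · Γ'`. For a periodic function, going up from
`d²(t)` to `d²(s)` and back down to `d²(t + L) = d²(t)` shows
`L d²(s) ≤ ∫₀^L d² + (L/2) ∫₀^L |(d²)'|`, and for `d ≤ ρ` both integrands are bounded pointwise
by the integrand of `F`: `d² ≤ ρ² (1 - f u)` and `2 d √(1 - u²) ≤ 2√2 ρ (1 - f u)`.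

The fundamental theorem of calculus for `d²` needs `σ` to be Lipschitz: near the curve, where
the curvature is at most `1/r`, the foot point `γ(σ(s))` moves at most four times as fast as
`Γ(s)`.
-/

open Set Filter Topology Function intervalIntegral
open scoped NNReal RealInnerProductSpace

theorem lipschitzWith_of_forall_eventually_dist_le {Y : Type*} [PseudoMetricSpace Y]
    {f : ℝ → Y} {C : ℝ≥0} (h : ∀ x, ∀ᶠ y in 𝓝 x, dist (f y) (f x) ≤ C * dist y x) :
    LipschitzWith C f := by
  have hf : Continuous f := continuous_iff_continuousAt.2 fun x =>
    tendsto_iff_dist_tendsto_zero.2 <| squeeze_zero' (Eventually.of_forall fun _ => dist_nonneg)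
      (h x) <| by
        simpa using ((tendsto_id (x := 𝓝 x)).dist (tendsto_const_nhds (x := x))).const_mul (C : ℝ)
  have hle : ∀ a b, a ≤ b → dist (f b) (f a) ≤ C * (b - a) := by
    intro a b hab
    let s := {x | dist (f x) (f a) ≤ C * (x - a)}
    have hs : IsClosed s := isClosed_le (hf.dist continuous_const) (by fun_prop)
    refine hs.inter isClosed_Icc |>.Icc_subset_of_forall_mem_nhdsWithin (by simp [s]) ?_
      ⟨hab, le_rfl⟩
    rintro x ⟨hx, -⟩
    filter_upwards [nhdsWithin_le_nhds (h x), self_mem_nhdsWithin] with y hy hxy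
    calc dist (f y) (f a) ≤ dist (f y) (f x) + dist (f x) (f a) := dist_triangle _ _ _
      _ ≤ C * (y - x) + C * (x - a) := by
          rw [Real.dist_eq, abs_of_pos (sub_pos.2 hxy)] at hy
          exact add_le_add hy hx
      _ = C * (y - a) := by ring
  refine LipschitzWith.of_dist_le_mul fun x y => ?_
  rcases le_total x y with hxy | hxy
  · rw [dist_comm, dist_comm x, Real.dist_eq, abs_of_nonneg (sub_nonneg.2 hxy)]
    exact hle x y hxy
  · rw [Real.dist_eq, abs_of_nonneg (sub_nonneg.2 hxy)]
    exact hle y x hxy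

section Curve

variable {E : Type*} [NormedAddCommGroup E] [InnerProductSpace ℝ E]

theorem lipschitzWith_one_of_norm_deriv_le_one {γ : ℝ → E} (hγ : Differentiable ℝ γ)
    (h : ∀ s, ‖deriv γ s‖ ≤ 1) : LipschitzWith 1 γ :=
  lipschitzWith_of_nnnorm_deriv_le hγ fun s => by simpa [← NNReal.coe_le_coe] using h s

theorem abs_real_inner_le_norm_mul_sqrt_of_inner_eq_zero {x v y : E} (hv : ‖v‖ = 1)
    (hxv : ⟪x, v⟫ = 0) : |⟪x, y⟫| ≤ ‖x‖ * √(‖y‖ ^ 2 - ⟪v, y⟫ ^ 2) := by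
  have hproj : ⟪x, y⟫ = ⟪x, y - ⟪v, y⟫ • v⟫ := by
    rw [inner_sub_right, real_inner_smul_right, hxv, mul_zero, sub_zero]
  have hnorm : ‖y - ⟪v, y⟫ • v‖ = √(‖y‖ ^ 2 - ⟪v, y⟫ ^ 2) := by
    rw [← Real.sqrt_sq (norm_nonneg _), norm_sub_sq_real, norm_smul, real_inner_smul_right,
      Real.norm_eq_abs, mul_pow, sq_abs, hv, real_inner_comm y v]
    ring_nf
  rw [hproj, ← hnorm]
  exact abs_real_inner_le_norm _ _

theorem abs_deriv_norm_sub_sq_le {Γ γ : ℝ → E} {σ : ℝ → ℝ} {s : ℝ}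
    (hΓ : DifferentiableAt ℝ Γ s) (hσ : DifferentiableAt ℝ σ s)
    (hγ : DifferentiableAt ℝ γ (σ s)) (hunit : ‖deriv γ (σ s)‖ = 1)
    (horth : ⟪Γ s - γ (σ s), deriv γ (σ s)⟫ = 0) :
    |deriv (fun t => ‖Γ t - γ (σ t)‖ ^ 2) s| ≤
      2 * ‖Γ s - γ (σ s)‖ * √(‖deriv Γ s‖ ^ 2 - ⟪deriv γ (σ s), deriv Γ s⟫ ^ 2) := by
  have hw : HasDerivAt (fun t => Γ t - γ (σ t)) (deriv Γ s - deriv σ s • deriv γ (σ s)) s :=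
    hΓ.hasDerivAt.sub (hγ.hasDerivAt.scomp s hσ.hasDerivAt)
  rw [hw.norm_sq.deriv, inner_sub_right, real_inner_smul_right, horth, mul_zero, sub_zero,
    abs_mul, abs_two, mul_assoc]
  exact mul_le_mul_of_nonneg_left
    (abs_real_inner_le_norm_mul_sqrt_of_inner_eq_zero hunit horth) zero_le_two

variable {γ : ℝ → E} {r : ℝ}

theorem sub_le_four_mul_norm_sub_of_inner_deriv_eq_zero (hγ : ContDiff ℝ 2 γ)
    (hunit : ∀ s, ‖deriv γ s‖ = 1) (hcurv : ∀ s, ‖deriv (deriv γ) s‖ ≤ 1 / r)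
    {p q : E} {s t : ℝ} (hts : t ≤ s) (hst : s - t ≤ r / 2) (hp : ‖p - γ s‖ ≤ r / 4)
    (hps : ⟪p - γ s, deriv γ s⟫ = 0) (hqt : ⟪q - γ t, deriv γ t⟫ = 0) :
    s - t ≤ 4 * ‖p - q‖ := by
  have hγ1 : Differentiable ℝ γ := hγ.differentiable two_ne_zero
  have hγ2 : Differentiable ℝ (deriv γ) :=
    ((contDiff_succ_iff_deriv (n := 1)).mp hγ).2.2.differentiable one_ne_zero
  have hlip := lipschitzWith_one_of_norm_deriv_le_one hγ1 fun x => (hunit x).le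
  set h : ℝ → ℝ := fun τ => ⟪p - γ τ, deriv γ τ⟫
  have hderiv : ∀ τ, HasDerivAt h (⟪p - γ τ, deriv (deriv γ) τ⟫ - 1) τ := fun τ => by
    have := ((hasDerivAt_const τ p).sub (hγ1 τ).hasDerivAt).inner ℝ (hγ2 τ).hasDerivAt
    refine this.congr_deriv ?_
    rw [zero_sub, inner_neg_left, real_inner_self_eq_norm_sq, hunit, Pi.sub_apply]
    ring
  -- along `[t, s]` the point `p` stays in the tube of radius `3r/4`, where the curvature bound
  -- keeps `h' ≤ 3/4 - 1`
  have hslope : ∀ τ ∈ Icc t s, deriv h τ ≤ -(1 / 4) := fun τ hτ => by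
    have hdist : ‖p - γ τ‖ ≤ 3 * r / 4 := calc
      ‖p - γ τ‖ ≤ ‖p - γ s‖ + ‖γ s - γ τ‖ := norm_sub_le_norm_sub_add_norm_sub _ _ _
      _ ≤ r / 4 + (s - τ) := by
          gcongr
          simpa [dist_eq_norm, Real.dist_eq, abs_of_nonneg (sub_nonneg.2 hτ.2)] using
            hlip.dist_le_mul s τ
      _ ≤ 3 * r / 4 := by linarith [hτ.1]
    have : ⟪p - γ τ, deriv (deriv γ) τ⟫ ≤ 3 / 4 := calc
      _ ≤ ‖p - γ τ‖ * ‖deriv (deriv γ) τ‖ := real_inner_le_norm _ _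
      _ ≤ 3 * r / 4 * (1 / r) :=
          mul_le_mul hdist (hcurv τ) (norm_nonneg _) (by linarith [norm_nonneg (p - γ τ)])
      _ = 3 / 4 * (r / r) := by ring
      _ ≤ 3 / 4 := mul_le_of_le_one_right (by norm_num) (div_self_le_one r)
    rw [(hderiv τ).deriv]
    linarith
  have hdecr := (convex_Icc t s).image_sub_le_mul_sub_of_deriv_le
    (fun τ _ => (hderiv τ).continuousAt.continuousWithinAt)
    (fun τ _ => (hderiv τ).differentiableAt.differentiableWithinAt)
    (fun τ hτ => hslope τ (interior_subset hτ)) t ⟨le_rfl, hts⟩ s ⟨hts, le_rfl⟩ hts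
  have hht : h t ≤ ‖p - q‖ := calc
    h t = ⟪p - q, deriv γ t⟫ := by
      simp only [h, show p - γ t = (p - q) + (q - γ t) by abel, inner_add_left, hqt, add_zero]
    _ ≤ ‖p - q‖ := by simpa [hunit t] using real_inner_le_norm (p - q) (deriv γ t)
  have hhs : h s = 0 := hps
  linarith

theorem abs_sub_le_four_mul_norm_sub_of_inner_deriv_eq_zero (hγ : ContDiff ℝ 2 γ)
    (hunit : ∀ s, ‖deriv γ s‖ = 1) (hcurv : ∀ s, ‖deriv (deriv γ) s‖ ≤ 1 / r)
    {p q : E} {s t : ℝ} (hst : |s - t| ≤ r / 2) (hp : ‖p - γ s‖ ≤ r / 4)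
    (hq : ‖q - γ t‖ ≤ r / 4) (hps : ⟪p - γ s, deriv γ s⟫ = 0)
    (hqt : ⟪q - γ t, deriv γ t⟫ = 0) : |s - t| ≤ 4 * ‖p - q‖ := by
  rcases le_total t s with hts | hst'
  · rw [abs_of_nonneg (sub_nonneg.2 hts)] at hst ⊢
    exact sub_le_four_mul_norm_sub_of_inner_deriv_eq_zero hγ hunit hcurv hts hst hp hps hqt
  · rw [abs_sub_comm, abs_of_nonneg (sub_nonneg.2 hst')] at hst ⊢
    rw [norm_sub_rev]
    exact sub_le_four_mul_norm_sub_of_inner_deriv_eq_zero hγ hunit hcurv hst' hst hq hqt hps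

theorem lipschitzWith_of_inner_deriv_eq_zero (hγ : ContDiff ℝ 2 γ)
    (hunit : ∀ s, ‖deriv γ s‖ = 1) (hcurv : ∀ s, ‖deriv (deriv γ) s‖ ≤ 1 / r) (hr : 0 < r)
    {Γ : ℝ → E} {σ : ℝ → ℝ} {K : ℝ≥0} (hΓ : LipschitzWith K Γ) (hσ : Continuous σ)
    (hnear : ∀ s, ‖Γ s - γ (σ s)‖ ≤ r / 4) (horth : ∀ s, ⟪Γ s - γ (σ s), deriv γ (σ s)⟫ = 0) :
    LipschitzWith (4 * K) σ := by
  refine lipschitzWith_of_forall_eventually_dist_le fun x => ?_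
  filter_upwards [hσ.continuousAt <| Metric.closedBall_mem_nhds (σ x) (half_pos hr)] with y hy
  calc dist (σ y) (σ x) ≤ 4 * ‖Γ y - Γ x‖ :=
        abs_sub_le_four_mul_norm_sub_of_inner_deriv_eq_zero hγ hunit hcurv hy (hnear y)
          (hnear x) (horth y) (horth x)
    _ ≤ 4 * (K * dist y x) := by
        rw [← dist_eq_norm]
        exact mul_le_mul_of_nonneg_left (hΓ.dist_le_mul y x) zero_le_four
    _ = ↑(4 * K) * dist y x := by push_cast; ring

end Curve

theorem sq_mul_one_sub_fcut_sq_mul {ρ d : ℝ} (hρ : 0 < ρ) (hd : 0 ≤ d) (hdρ : d ≤ ρ) (u : ℝ) :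
    ρ ^ 2 * (1 - fcut ρ (d ^ 2) * u) = ρ ^ 2 - (ρ ^ 2 - d ^ 2) * u := by
  rw [fcut, max_eq_left <| sub_nonneg.2 <| (div_le_one (by positivity)).2 <|
    pow_le_pow_left₀ hd hdρ 2]
  field_simp

theorem abs_fcut_sq_mul_le_one (ρ d : ℝ) {u : ℝ} (hu : |u| ≤ 1) : |fcut ρ (d ^ 2) * u| ≤ 1 := by
  have h0 : 0 ≤ fcut ρ (d ^ 2) := le_max_right _ _
  have h1 : fcut ρ (d ^ 2) ≤ 1 := max_le (sub_le_self _ (by positivity)) zero_le_one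
  rw [abs_mul, abs_of_nonneg h0]
  exact mul_le_one₀ h1 (abs_nonneg u) hu

theorem continuous_fcut (ρ : ℝ) : Continuous (fcut ρ) :=
  (continuous_const.sub (continuous_id.div_const _)).max continuous_const

theorem sq_le_sq_mul_one_sub_fcut_mul {ρ d u : ℝ} (hρ : 0 < ρ) (hd : 0 ≤ d) (hdρ : d ≤ ρ)
    (hu : u ≤ 1) : d ^ 2 ≤ ρ ^ 2 * (1 - fcut ρ (d ^ 2) * u) := by
  rw [sq_mul_one_sub_fcut_sq_mul hρ hd hdρ]
  nlinarith [pow_le_pow_left₀ hd hdρ 2]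

theorem mul_sqrt_one_sub_sq_le_one_sub_fcut_mul {ρ d u : ℝ} (hρ : 0 < ρ) (hd : 0 ≤ d)
    (hdρ : d ≤ ρ) (hu : u ≤ 1) :
    d * √(1 - u ^ 2) ≤ √2 * ρ * (1 - fcut ρ (d ^ 2) * u) := by
  have hA := sq_mul_one_sub_fcut_sq_mul hρ hd hdρ u
  set A := 1 - fcut ρ (d ^ 2) * u
  have hA0 : 0 ≤ ρ * A := by
    nlinarith [sq_le_sq_mul_one_sub_fcut_mul hρ hd hdρ hu, sq_nonneg d]
  -- with `v = 1 - u`: `2 (ρ² - (ρ² - d²) u)² - ρ² d² (1 - u²)`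
  --   `= ((2d² + v (ρ² - 2d²))² + v² ρ² (3ρ² - 2d²)) / 2`
  have hpoly : ρ ^ 2 * (d ^ 2 * (1 - u ^ 2)) ≤ ρ ^ 2 * (2 * (ρ * A) ^ 2) := by
    have : ρ ^ 2 * (2 * (ρ * A) ^ 2) = 2 * (ρ ^ 2 * A) ^ 2 := by ring
    rw [this, hA]
    nlinarith [sq_nonneg (2 * d ^ 2 + (1 - u) * (ρ ^ 2 - 2 * d ^ 2)),
      mul_nonneg (mul_nonneg (sq_nonneg (1 - u)) (sq_nonneg ρ))
        (by nlinarith : (0:ℝ) ≤ 3 * ρ ^ 2 - 2 * d ^ 2)]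
  calc d * √(1 - u ^ 2) = √(d ^ 2 * (1 - u ^ 2)) := by
        rw [Real.sqrt_mul (sq_nonneg d), Real.sqrt_sq hd]
    _ ≤ √(2 * (ρ * A) ^ 2) := Real.sqrt_le_sqrt (le_of_mul_le_mul_left hpoly (by positivity))
    _ = √2 * ρ * A := by rw [Real.sqrt_mul zero_le_two, Real.sqrt_sq hA0, mul_assoc]

theorem Function.Periodic.mul_le_integral_add_integral_abs_deriv {g : ℝ → ℝ} {L : ℝ}
    (hper : Periodic g L) (hL : 0 ≤ L) (hg : ∀ a b, AbsolutelyContinuousOnInterval g a b)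
    (s : ℝ) : L * g s ≤ (∫ x in 0..L, g x) + L / 2 * ∫ x in 0..L, |deriv g x| := by
  set J := ∫ x in 0..L, |deriv g x|
  have hint : ∀ a b, IntervalIntegrable (fun x => |deriv g x|) volume a b := fun a b =>
    (hg a b).intervalIntegrable_deriv.abs
  have hJ : ∀ t, ∫ x in t..t + L, |deriv g x| = J := fun t => by
    have hper' : Periodic (fun x => |deriv g x|) L := fun x => by
      simp only [← deriv_comp_add_const, hper.funext]
    simpa using hper'.intervalIntegral_add_eq t 0
  have hpoint : ∀ t ∈ Icc (s - L) s, 2 * g s ≤ 2 * g t + J := fun t ht => by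
    have hup : g s - g t ≤ ∫ x in t..s, |deriv g x| := by
      rw [← (hg t s).integral_deriv_eq_sub]
      exact integral_mono_on ht.2 (hg t s).intervalIntegrable_deriv (hint t s)
        fun x _ => le_abs_self _
    have hdown : g s - g t ≤ ∫ x in s..t + L, |deriv g x| := by
      rw [← hper t, ← neg_sub, ← (hg s (t + L)).integral_deriv_eq_sub,
        ← intervalIntegral.integral_neg]
      exact integral_mono_on (by linarith [ht.1]) (hg _ _).intervalIntegrable_deriv.neg
        (hint _ _) fun x _ => neg_le_abs _
    rw [← hJ t, ← integral_add_adjacent_intervals (hint t s) (hint s (t + L))]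
    linarith
  have hgint : IntervalIntegrable g volume (s - L) s := (hg _ _).continuousOn.intervalIntegrable
  have hmono := integral_mono_on (by linarith) intervalIntegrable_const
    ((hgint.const_mul 2).add intervalIntegrable_const) hpoint
  have hshift : ∫ x in s - L..s, g x = ∫ x in 0..L, g x := by
    simpa using hper.intervalIntegral_add_eq (s - L) 0
  rw [intervalIntegral.integral_const, integral_add (hgint.const_mul 2) intervalIntegrable_const,
    intervalIntegral.integral_const_mul, intervalIntegral.integral_const, hshift] at hmono
  simp only [sub_sub_cancel, smul_eq_mul] at hmono
  linarith

theorem sq_le_mul_integral_one_sub_fcut_mul {D u : ℝ → ℝ} {K : ℝ≥0} {L ρ : ℝ} (hL : 0 < L)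
    (hρ : 0 < ρ) (hper : Periodic D L) (hlip : LipschitzWith K D) (hD0 : ∀ s, 0 ≤ D s)
    (hDρ : ∀ s, D s ≤ ρ) (hu : AEStronglyMeasurable u) (hu1 : ∀ᵐ s, |u s| ≤ 1)
    (hderiv : ∀ᵐ s, |deriv (fun t => D t ^ 2) s| ≤ 2 * D s * √(1 - u s ^ 2)) (s : ℝ) :
    D s ^ 2 ≤ (√2 * ρ + ρ ^ 2 / L) * ∫ t in 0..L, (1 - fcut ρ (D t ^ 2) * u t) := by
  set F := ∫ t in 0..L, (1 - fcut ρ (D t ^ 2) * u t)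
  have hac : ∀ a b, AbsolutelyContinuousOnInterval (fun t => D t ^ 2) a b := fun a b => by
    have hD := (hlip.lipschitzOnWith (s := uIcc a b)).absolutelyContinuousOnInterval
    rw [show (fun t => D t ^ 2) = D * D from funext fun t => sq (D t)]
    exact hD.mul hD
  have hFint : IntervalIntegrable (fun t => 1 - fcut ρ (D t ^ 2) * u t) volume 0 L := by
    refine (intervalIntegrable_const (c := (1:ℝ))).sub ?_
    refine (intervalIntegrable_iff.2 <| Measure.integrableOn_of_bounded (M := 1)
      measure_Ioc_lt_top.ne ?_ ?_)
    · exact ((continuous_fcut ρ).comp (hlip.continuous.pow 2)).aestronglyMeasurable.mul hu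
    · exact ae_restrict_of_ae <| hu1.mono fun t ht => abs_fcut_sq_mul_le_one ρ (D t) ht
  have hsq : ∫ t in 0..L, D t ^ 2 ≤ ρ ^ 2 * F := by
    rw [← intervalIntegral.integral_const_mul]
    refine integral_mono_ae hL.le (hac 0 L).continuousOn.intervalIntegrable
      (hFint.const_mul _) (hu1.mono fun t ht => ?_)
    exact sq_le_sq_mul_one_sub_fcut_mul hρ (hD0 t) (hDρ t) (abs_le.1 ht).2
  have hderiv_int : ∫ t in 0..L, |deriv (fun t => D t ^ 2) t| ≤ 2 * (√2 * ρ * F) := by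
    rw [← intervalIntegral.integral_const_mul, ← intervalIntegral.integral_const_mul]
    refine integral_mono_ae hL.le (hac 0 L).intervalIntegrable_deriv.abs
      ((hFint.const_mul _).const_mul _) ((hderiv.and hu1).mono fun t ht => ?_)
    calc |deriv (fun t => D t ^ 2) t| ≤ 2 * (D t * √(1 - u t ^ 2)) := by linarith [ht.1]
      _ ≤ _ := by
        refine mul_le_mul_of_nonneg_left ?_ zero_le_two
        exact mul_sqrt_one_sub_sq_le_one_sub_fcut_mul hρ (hD0 t) (hDρ t) (abs_le.1 ht.2).2
  have hper2 : Periodic (fun t => D t ^ 2) L := fun t => by simp only [hper t]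
  have hmain := hper2.mul_le_integral_add_integral_abs_deriv hL.le hac s
  rw [← mul_le_mul_iff_right₀ hL]
  calc L * D s ^ 2 ≤ _ := hmain
    _ ≤ ρ ^ 2 * F + L / 2 * (2 * (√2 * ρ * F)) := by gcongr
    _ = L * ((√2 * ρ + ρ ^ 2 / L) * F) := by field_simp; ring

theorem stmt5_general
    (γ : ℝ → R3) (hγ : ContDiff ℝ 2 γ)
    (harcγ : ∀ s : ℝ, ‖deriv γ s‖ = 1)
    (ℓ : ℝ) (a : R3) (hperγ : ∀ s : ℝ, γ (s + ℓ) = γ s + a)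
    (r : ℝ) (hr : 0 < r)
    (hcurv : ∀ s : ℝ, ‖deriv (deriv γ) s‖ ≤ 1 / r)
    (Γ : ℝ → R3) (hΓlip : ∃ K : NNReal, LipschitzWith K Γ)
    (harcΓ : ∀ᵐ s : ℝ ∂volume, ‖deriv Γ s‖ = 1)
    (L : ℝ) (hL : 0 < L) (hperΓ : ∀ s : ℝ, Γ (s + L) = Γ s + a)
    (σ : ℝ → ℝ) (hσc : Continuous σ)
    (hσ : ∀ s : ℝ,
      σ (s + L) = σ s + ℓ ∧
      ‖Γ s - γ (σ s)‖ < r / 8 ∧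
      (inner ℝ (Γ s - γ (σ s)) (deriv γ (σ s)) : ℝ) = 0)
    (ρ : ℝ) (hρpos : 0 < ρ)
    (hρ : (⨆ s : ℝ, ‖Γ s - γ (σ s)‖) ≤ ρ) :
    (⨆ s : ℝ, ‖Γ s - γ (σ s)‖) ^ 2 ≤
      (Real.sqrt 2 * ρ + ρ ^ 2 / L) * Fdisc γ Γ σ ρ L := by
  obtain ⟨K, hK⟩ := hΓlip
  have hγ1 : Differentiable ℝ γ := hγ.differentiable two_ne_zero
  have hσlip : LipschitzWith (4 * K) σ := lipschitzWith_of_inner_deriv_eq_zero hγ harcγ hcurv hr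
    hK hσc (fun s => by linarith [(hσ s).2.1]) fun s => (hσ s).2.2
  set D : ℝ → ℝ := fun s => ‖Γ s - γ (σ s)‖
  have hDlip : LipschitzWith _ D := lipschitzWith_one_norm.comp
    (hK.sub ((lipschitzWith_one_of_norm_deriv_le_one hγ1 fun s => (harcγ s).le).comp hσlip))
  have hDper : Periodic D L := fun s => by
    simp only [D, hperΓ, (hσ s).1, hperγ, add_sub_add_right_eq_sub]
  have hDρ : ∀ s, D s ≤ ρ := fun s =>
    (le_ciSup ⟨r / 8, by rintro _ ⟨t, rfl⟩; exact (hσ t).2.1.le⟩ s).trans hρ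
  have hu1 : ∀ᵐ s, |⟪deriv γ (σ s), deriv Γ s⟫| ≤ 1 := harcΓ.mono fun s hs => by
    simpa [harcγ, hs] using abs_real_inner_le_norm (deriv γ (σ s)) (deriv Γ s)
  have hderiv : ∀ᵐ s, |deriv (fun t => D t ^ 2) s| ≤
      2 * D s * √(1 - ⟪deriv γ (σ s), deriv Γ s⟫ ^ 2) := by
    filter_upwards [hK.ae_differentiableAt, hσlip.ae_differentiableAt, harcΓ] with s hΓs hσs hs
    simpa [hs] using abs_deriv_norm_sub_sq_le hΓs hσs (hγ1 _) (harcγ _) (hσ s).2.2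
  have hbound : ∀ s, D s ^ 2 ≤ (√2 * ρ + ρ ^ 2 / L) * Fdisc γ Γ σ ρ L :=
    sq_le_mul_integral_one_sub_fcut_mul hL hρpos hDper hDlip (fun _ => norm_nonneg _) hDρ
      (((hγ.continuous_deriv one_le_two).comp hσc).measurable.inner
        (measurable_deriv Γ)).aestronglyMeasurable hu1 hderiv
  have hsup : (⨆ s, D s) ≤ √((√2 * ρ + ρ ^ 2 / L) * Fdisc γ Γ σ ρ L) :=
    Real.iSup_le (fun s => Real.le_sqrt_of_sq_le (hbound s)) (Real.sqrt_nonneg _)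
  calc (⨆ s, D s) ^ 2 ≤ √((√2 * ρ + ρ ^ 2 / L) * Fdisc γ Γ σ ρ L) ^ 2 :=
        pow_le_pow_left₀ (Real.iSup_nonneg fun _ => norm_nonneg _) hsup 2
    _ = _ := Real.sq_sqrt ((sq_nonneg _).trans (hbound 0))

/-- Lemma 3.8: the sup distance squared is controlled by `F`. -/
theorem stmt5
    (γ : ℝ → R3) (hγ : ContDiff ℝ 2 γ)
    (harcγ : ∀ s : ℝ, ‖deriv γ s‖ = 1)
    (ℓ : ℝ) (hℓ : 0 < ℓ) (a : R3) (hperγ : ∀ s : ℝ, γ (s + ℓ) = γ s + a)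
    (r : ℝ) (hr : 0 < r)
    (hcurv : ∀ s : ℝ, ‖deriv (deriv γ) s‖ ≤ 1 / r)
    (Γ : ℝ → R3) (hΓlip : ∃ K : NNReal, LipschitzWith K Γ)
    (harcΓ : ∀ᵐ s : ℝ ∂volume, ‖deriv Γ s‖ = 1)
    (L : ℝ) (hL : 0 < L) (hperΓ : ∀ s : ℝ, Γ (s + L) = Γ s + a)
    (σ : ℝ → ℝ) (hσc : Continuous σ)
    (hσ : ∀ s : ℝ,
      σ (s + L) = σ s + ℓ ∧
      ‖Γ s - γ (σ s)‖ < r / 8 ∧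
      (inner ℝ (Γ s - γ (σ s)) (deriv γ (σ s)) : ℝ) = 0)
    (ρ : ℝ) (hρpos : 0 < ρ)
    (hρ : (⨆ s : ℝ, ‖Γ s - γ (σ s)‖) ≤ ρ) :
    (⨆ s : ℝ, ‖Γ s - γ (σ s)‖) ^ 2 ≤
      (Real.sqrt 2 * ρ + ρ ^ 2 / L) * Fdisc γ Γ σ ρ L :=
  stmt5_general γ hγ harcγ ℓ a hperγ r hr hcurv Γ hΓlip harcΓ L hL hperΓ σ hσc hσ ρ hρpos hρ
end
end

section
/- Let ℓ > 0 and let u : ℝ × ℝ → ℝ³ be a smooth map, ℓ-periodic in the second variable, with |u(t,s)| = 1 everywhere, solving the Schrödinger map equation ∂ₜu = ∂ₛ(u × ∂ₛu), and set u⁰ := u(0,·). Then for every t ∈ ℝ, ∫₀^ℓ |∂ₛₛu(t,s)|² ds ≤ 4 ∫₀^ℓ |∂ₛₛu⁰(s)|² ds + 2 (∫₀^ℓ |∂ₛu⁰(s)|² ds)³. -/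
noncomputable section
open Real MeasureTheory intervalIntegral Metric

/-- Pack three real numbers into a vector of `ℝ³`. -/
def toE (v : Fin 3 → ℝ) : R3 := (EuclideanSpace.equiv (Fin 3) ℝ).symm v

/-- The cross product on `ℝ³`. -/
def cross3 (a b : R3) : R3 :=
  toE ![a 1 * b 2 - a 2 * b 1, a 2 * b 0 - a 0 * b 2, a 0 * b 1 - a 1 * b 0]

local notation "⟪" x ", " y "⟫" => @inner ℝ _ _ x y

/-! ### Coordinate API for `cross3` -/

lemma R3.ext' {a b : R3} (h0 : a 0 = b 0) (h1 : a 1 = b 1) (h2 : a 2 = b 2) : a = b := by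
  ext i
  fin_cases i <;> assumption

lemma cross3_c (a b : R3) (i : Fin 3) : cross3 a b i =
    ![a 1 * b 2 - a 2 * b 1, a 2 * b 0 - a 0 * b 2, a 0 * b 1 - a 1 * b 0] i := rfl

lemma cross3_c0 (a b : R3) : cross3 a b 0 = a 1 * b 2 - a 2 * b 1 := rfl
lemma cross3_c1 (a b : R3) : cross3 a b 1 = a 2 * b 0 - a 0 * b 2 := rfl
lemma cross3_c2 (a b : R3) : cross3 a b 2 = a 0 * b 1 - a 1 * b 0 := rfl

lemma inner3 (a b : R3) : ⟪a, b⟫ = a 0 * b 0 + a 1 * b 1 + a 2 * b 2 := by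
  simp [PiLp.inner_apply, Fin.sum_univ_three, mul_comm]

def crossl : R3 →ₗ[ℝ] R3 →ₗ[ℝ] R3 :=
  LinearMap.mk₂ ℝ cross3
    (fun a a' b => by
      apply R3.ext' <;> simp [cross3_c, PiLp.add_apply] <;> ring)
    (fun c a b => by
      apply R3.ext' <;> simp [cross3_c, PiLp.smul_apply, smul_eq_mul] <;> ring)
    (fun a b b' => by
      apply R3.ext' <;> simp [cross3_c, PiLp.add_apply] <;> ring)
    (fun c a b => by
      apply R3.ext' <;> simp [cross3_c, PiLp.smul_apply, smul_eq_mul] <;> ring)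

def crossCLM : R3 →L[ℝ] R3 →L[ℝ] R3 :=
  LinearMap.toContinuousLinearMap
    { toFun := fun a => LinearMap.toContinuousLinearMap (crossl a)
      map_add' := fun a a' => by ext b; simp
      map_smul' := fun c a => by ext b; simp }

lemma crossCLM_apply (a b : R3) : crossCLM a b = cross3 a b := rfl

lemma hasDerivAt_cross {f g : ℝ → R3} {f' g' : R3} {x : ℝ}
    (hf : HasDerivAt f f' x) (hg : HasDerivAt g g' x) :
    HasDerivAt (fun y => cross3 (f y) (g y)) (cross3 f' (g x) + cross3 (f x) g') x := by
  have := crossCLM.hasDerivAt_of_bilinear (fun _ => hf) (fun _ => hg)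
  simpa [crossCLM_apply, add_comm] using this

lemma contDiff_cross {n : ℕ∞} {E : Type*} [NormedAddCommGroup E] [NormedSpace ℝ E]
    {f g : E → R3} (hf : ContDiff ℝ n f) (hg : ContDiff ℝ n g) :
    ContDiff ℝ n (fun x => cross3 (f x) (g x)) :=
  crossCLM.isBoundedBilinearMap.contDiff.comp (hf.prodMk hg)

lemma cross3_self (a : R3) : cross3 a a = 0 := by
  apply R3.ext' <;> simp [cross3_c] <;> ring

/-! ### partial derivative infrastructure -/

section Partial

variable {E : Type*} [NormedAddCommGroup E] [NormedSpace ℝ E]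

lemma hasDerivAt_sect2 {f : ℝ × ℝ → E} (hf : Differentiable ℝ f) (t s : ℝ) :
    HasDerivAt (fun σ => f (t, σ)) (fderiv ℝ f (t, s) (0, 1)) s := by
  have h1 : HasDerivAt (fun σ : ℝ => ((t, σ) : ℝ × ℝ)) (0, 1) s :=
    (hasDerivAt_const s t).prodMk (hasDerivAt_id s)
  exact (hf (t, s)).hasFDerivAt.comp_hasDerivAt s h1

lemma hasDerivAt_sect1 {f : ℝ × ℝ → E} (hf : Differentiable ℝ f) (t s : ℝ) :
    HasDerivAt (fun τ => f (τ, s)) (fderiv ℝ f (t, s) (1, 0)) t := by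
  have h1 : HasDerivAt (fun τ : ℝ => ((τ, s) : ℝ × ℝ)) (1, 0) t :=
    (hasDerivAt_id t).prodMk (hasDerivAt_const t s)
  exact (hf (t, s)).hasFDerivAt.comp_hasDerivAt t h1

lemma contDiff_pfderiv {f : ℝ × ℝ → E} (hf : ContDiff ℝ (⊤ : ℕ∞) f) (c : ℝ × ℝ) :
    ContDiff ℝ (⊤ : ℕ∞) (fun p => fderiv ℝ f p c) :=
  (hf.fderiv_right ((by simp))).clm_apply contDiff_const

lemma pfderiv_comm {f : ℝ × ℝ → E} (hf : ContDiff ℝ (⊤ : ℕ∞) f) (c₁ c₂ p : ℝ × ℝ) :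
    fderiv ℝ (fun q => fderiv ℝ f q c₁) p c₂ =
    fderiv ℝ (fun q => fderiv ℝ f q c₂) p c₁ := by
  have hd : Differentiable ℝ (fderiv ℝ f) := (hf.fderiv_right (m := (⊤ : ℕ∞)) ((by simp))).differentiable (by simp)
  have e1 : ∀ c : ℝ × ℝ, fderiv ℝ (fun q => fderiv ℝ f q c) p =
      (fderiv ℝ (fderiv ℝ f) p).flip c := by
    intro c
    refine ContinuousLinearMap.ext fun y => ?_
    rw [fderiv_clm_apply (hd p) (differentiableAt_const c)]
    simp
  rw [e1, e1]
  have hsymm := second_derivative_symmetric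
    (f' := fderiv ℝ f) (f'' := fderiv ℝ (fderiv ℝ f) p) (x := p)
    (fun y => ((hf.differentiable (by simp)) y).hasFDerivAt)
    ((hd p).hasFDerivAt) c₂ c₁
  simpa using hsymm

end Partial

lemma hasDerivAt_parint {Φ : ℝ × ℝ → ℝ} (hΦ : ContDiff ℝ (⊤ : ℕ∞) Φ) (a b t₀ : ℝ) :
    HasDerivAt (fun t => ∫ s in a..b, Φ (t, s))
      (∫ s in a..b, fderiv ℝ Φ (t₀, s) (1, 0)) t₀ := by
  have hΦc : Continuous Φ := hΦ.continuous
  have hΦ'' : ContDiff ℝ (⊤ : ℕ∞) fun p : ℝ × ℝ => fderiv ℝ Φ p (1, 0) := contDiff_pfderiv hΦ _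
  have hΦ' : Continuous fun p : ℝ × ℝ => fderiv ℝ Φ p (1, 0) := hΦ''.continuous
  have hK : IsCompact ((closedBall t₀ 1) ×ˢ (Set.uIcc a b)) :=
    (isCompact_closedBall t₀ 1).prod isCompact_uIcc
  obtain ⟨M, hM⟩ : ∃ M, ∀ p ∈ (closedBall t₀ 1) ×ˢ (Set.uIcc a b),
      ‖fderiv ℝ Φ p (1, 0)‖ ≤ M :=
    hK.exists_bound_of_continuousOn hΦ'.continuousOn
  have main := intervalIntegral.hasDerivAt_integral_of_dominated_loc_of_deriv_le
    (F := fun t s => Φ (t, s)) (F' := fun t s => fderiv ℝ Φ (t, s) (1, 0))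
    (x₀ := t₀) (a := a) (b := b) (bound := fun _ => M) (μ := volume) (s := ball t₀ 1)
    (ball_mem_nhds t₀ one_pos)
    (Filter.Eventually.of_forall fun x =>
      ((hΦc.comp (continuous_const.prodMk continuous_id)).aestronglyMeasurable))
    ((hΦc.comp (continuous_const.prodMk continuous_id)).intervalIntegrable a b)
    ((hΦ'.comp (continuous_const.prodMk continuous_id)).aestronglyMeasurable)
    (Filter.Eventually.of_forall fun s hs x hx => by
      exact hM (x, s) ⟨ball_subset_closedBall hx, Set.uIoc_subset_uIcc hs⟩)
    (intervalIntegrable_const)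
    (Filter.Eventually.of_forall fun s hs x hx =>
      hasDerivAt_sect1 (hΦ.differentiable (by simp)) x s)
  exact main.2

/-! ### elementary integral lemmas -/

lemma integral_CS {a b : ℝ} (hab : a ≤ b) {φ ψ : ℝ → ℝ}
    (hφ : Continuous φ) (hψ : Continuous ψ) :
    (∫ x in a..b, φ x * ψ x) ^ 2 ≤ (∫ x in a..b, φ x ^ 2) * (∫ x in a..b, ψ x ^ 2) := by
  set A := ∫ x in a..b, φ x ^ 2 with hA
  set B := ∫ x in a..b, φ x * ψ x with hB
  set C := ∫ x in a..b, ψ x ^ 2 with hC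
  have key : ∀ t : ℝ, 0 ≤ A * t ^ 2 - 2 * B * t + C := by
    intro t
    have h0 : 0 ≤ ∫ x in a..b, (t * φ x - ψ x) ^ 2 :=
      intervalIntegral.integral_nonneg hab (fun x _ => sq_nonneg _)
    have hexp : (∫ x in a..b, (t * φ x - ψ x) ^ 2)
        = A * t ^ 2 - 2 * B * t + C := by
      have : ∀ x, (t * φ x - ψ x) ^ 2
          = t ^ 2 * φ x ^ 2 - (2 * t) * (φ x * ψ x) + ψ x ^ 2 := by intro x; ring
      rw [intervalIntegral.integral_congr (fun x _ => this x)]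
      rw [intervalIntegral.integral_add, intervalIntegral.integral_sub,
        intervalIntegral.integral_const_mul, intervalIntegral.integral_const_mul]
      · ring
      · exact (continuous_const.mul (hφ.pow 2)).intervalIntegrable a b
      · exact (continuous_const.mul (hφ.mul hψ)).intervalIntegrable a b
      · exact ((continuous_const.mul (hφ.pow 2)).sub
          (continuous_const.mul (hφ.mul hψ))).intervalIntegrable a b
      · exact (hψ.pow 2).intervalIntegrable a b
    linarith [h0, hexp.symm.le, hexp.le]
  by_cases hA0 : A = 0
  · have hB0 : B = 0 := by
      by_contra hB0
      have := key ((C + 1) / (2 * B))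
      rw [hA0] at this
      have h2B : 2 * B ≠ 0 := by simpa using hB0
      have e : 2 * B * ((C + 1) / (2 * B)) = C + 1 := by field_simp
      rcases lt_or_gt_of_ne hB0 with h | h
      · nlinarith
      · nlinarith
    have hC0 : 0 ≤ C := intervalIntegral.integral_nonneg hab (fun x _ => sq_nonneg _)
    rw [hB0, hA0]; nlinarith
  · have hA' : 0 ≤ A := intervalIntegral.integral_nonneg hab (fun x _ => sq_nonneg _)
    have hApos : 0 < A := lt_of_le_of_ne hA' (Ne.symm hA0)
    have := key (B / A)
    have h1 : A * (B / A) ^ 2 - 2 * B * (B / A) + C = C - B ^ 2 / A := by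
      field_simp; ring
    rw [h1] at this
    have h2 : B ^ 2 / A ≤ C := by linarith
    calc B ^ 2 = (B ^ 2 / A) * A := by field_simp
    _ ≤ C * A := by exact mul_le_mul_of_nonneg_right h2 hA'
    _ = A * C := by ring

lemma min_quarter {d ℓ A F : ℝ} (hd : 0 ≤ d) (hdl : d ≤ ℓ) (hA : 0 ≤ A) (hAF : A ≤ F) :
    min (d * A) ((ℓ - d) * (F - A)) ≤ ℓ * F / 4 := by
  have h1 : min (d * A) ((ℓ - d) * (F - A)) ≤ d * A := min_le_left _ _
  have h2 : min (d * A) ((ℓ - d) * (F - A)) ≤ (ℓ - d) * (F - A) := min_le_right _ _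
  by_contra hcon
  push_neg at hcon
  have hq : (0:ℝ) ≤ ℓ * F / 4 := by nlinarith
  have h3 : ℓ * F / 4 < d * A := lt_of_lt_of_le hcon h1
  have h4 : ℓ * F / 4 < (ℓ - d) * (F - A) := lt_of_lt_of_le hcon h2
  have hp : (ℓ * F / 4) * (ℓ * F / 4) < (d * A) * ((ℓ - d) * (F - A)) :=
    mul_lt_mul'' h3 h4 hq hq
  have q1 : d * (ℓ - d) ≤ ℓ ^ 2 / 4 := by nlinarith [sq_nonneg (ℓ - 2 * d)]
  have q2 : A * (F - A) ≤ F ^ 2 / 4 := by nlinarith [sq_nonneg (F - 2 * A)]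
  have q3 : (d * (ℓ - d)) * (A * (F - A)) ≤ (ℓ ^ 2 / 4) * (F ^ 2 / 4) := by
    have := mul_le_mul q1 q2 (mul_nonneg hA (by linarith)) (by nlinarith)
    linarith
  nlinarith [hp, q3]

lemma le_add_of_sq_le_four_mul {x y z : ℝ} (hy : 0 ≤ y) (hz : 0 ≤ z)
    (h : x ^ 2 ≤ 4 * (y * z)) : x ≤ y + z := by
  nlinarith [sq_nonneg (y - z)]

section GN

set_option maxHeartbeats 2000000 in
theorem GN_ineq {ℓ : ℝ} (hℓ : 0 < ℓ) {f f' : ℝ → R3}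
    (hf : ∀ s, HasDerivAt f (f' s) s) (hf'c : Continuous f')
    (hper : ∀ s, f (s + ℓ) = f s)
    (hmean : (∫ s in (0:ℝ)..ℓ, f s) = 0) :
    (∫ s in (0:ℝ)..ℓ, ⟪f s, f s⟫ ^ 2) ^ 2 ≤
      (∫ s in (0:ℝ)..ℓ, ⟪f s, f s⟫) ^ 3 * (∫ s in (0:ℝ)..ℓ, ⟪f' s, f' s⟫) := by
  have hℓ0 : (0:ℝ) ≤ ℓ := hℓ.le
  have hfc : Continuous f := by
    refine continuous_iff_continuousAt.2 fun x => (hf x).continuousAt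
  -- periodicity of f'
  have hper' : ∀ s, f' (s + ℓ) = f' s := by
    intro s
    have h1 : HasDerivAt (fun x => f (x + ℓ)) (f' (s + ℓ)) s := by
      simpa using (hf (s + ℓ)).comp_add_const s ℓ
    have h2 : (fun x => f (x + ℓ)) = f := funext hper
    rw [h2] at h1
    exact h1.unique (hf s)
  -- basic functions
  set g : ℝ → ℝ := fun s => ⟪f s, f s⟫ with hg
  set ip : ℝ → ℝ := fun s => ⟪f s, f' s⟫ with hip
  have hgc : Continuous g := hfc.inner hfc
  have hipc : Continuous ip := hfc.inner hf'c
  have hgd : ∀ s, HasDerivAt g (2 * ip s) s := by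
    intro s
    have h := (hf s).inner (𝕜 := ℝ) (hf s)
    have h2 : ⟪f s, f' s⟫ + ⟪f' s, f s⟫ = 2 * ip s := by
      simp only [hip, real_inner_comm (f s) (f' s)]; ring
    rw [h2] at h
    exact h
  have hgper : ∀ s, g (s + ℓ) = g s := fun s => by simp [hg, hper s]
  have hipper : ∀ s, |ip (s + ℓ)| = |ip s| := fun s => by simp [hip, hper s, hper' s]
  have hg0 : ∀ s, 0 ≤ g s := fun s => real_inner_self_nonneg
  -- quantities
  set E : ℝ := ∫ s in (0:ℝ)..ℓ, g s with hE
  set F : ℝ := ∫ s in (0:ℝ)..ℓ, ⟪f' s, f' s⟫ with hF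
  set G : ℝ := ∫ s in (0:ℝ)..ℓ, g s ^ 2 with hG
  set P : ℝ := ∫ s in (0:ℝ)..ℓ, |ip s| with hP
  have hE0 : 0 ≤ E := intervalIntegral.integral_nonneg hℓ0 fun x _ => hg0 x
  have hF0 : 0 ≤ F :=
    intervalIntegral.integral_nonneg hℓ0 fun x _ => real_inner_self_nonneg
  have hG0 : 0 ≤ G := intervalIntegral.integral_nonneg hℓ0 fun x _ => sq_nonneg _
  have hP0 : 0 ≤ P := intervalIntegral.integral_nonneg hℓ0 fun x _ => abs_nonneg _
  -- the quantity Pab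
  set Pab : ℝ → ℝ → ℝ := fun x y => ∫ u in x..y, |ip u| with hPab
  have hPabi : ∀ a b : ℝ, IntervalIntegrable (fun u => |ip u|) volume a b :=
    fun a b => (hipc.abs).intervalIntegrable a b
  have hPab_add : ∀ x y z : ℝ, Pab x y + Pab y z = Pab x z := fun x y z =>
    integral_add_adjacent_intervals (hPabi x y) (hPabi y z)
  have hPab_nonneg : ∀ {x y : ℝ}, x ≤ y → 0 ≤ Pab x y := fun {x y} h =>
    intervalIntegral.integral_nonneg h fun u _ => abs_nonneg _
  have hPab_shift : ∀ x y : ℝ, Pab (x + ℓ) (y + ℓ) = Pab x y := by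
    intro x y
    rw [hPab]
    simp only
    rw [← intervalIntegral.integral_comp_add_right (fun u => |ip u|) ℓ]
    exact intervalIntegral.integral_congr fun u _ => hipper u
  -- P split: for 0 ≤ x ≤ y ≤ ℓ,   P = Pab 0 x + Pab x y + Pab y ℓ
  have hPsplit : ∀ {x y : ℝ}, Pab 0 x + Pab x y + Pab y ℓ = P := by
    intro x y
    rw [hPab_add, hPab_add]
  -- FTC for g
  have hgFTC : ∀ x y : ℝ, (∫ u in x..y, 2 * ip u) = g y - g x := fun x y =>
    integral_eq_sub_of_hasDerivAt (fun u _ => hgd u)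
      ((continuous_const.mul hipc).intervalIntegrable x y)
  have habs : ∀ x y : ℝ, x ≤ y → |g y - g x| ≤ 2 * Pab x y := by
    intro x y hxy
    rw [← hgFTC x y]
    calc |∫ u in x..y, 2 * ip u| ≤ ∫ u in x..y, |2 * ip u| := by
          exact intervalIntegral.abs_integral_le_integral_abs hxy
    _ = 2 * Pab x y := by
          rw [hPab]
          simp only
          rw [← intervalIntegral.integral_const_mul]
          exact intervalIntegral.integral_congr fun u _ => by
            rw [abs_mul]; norm_num
  -- wrap-around bound
  have habs2 : ∀ x y : ℝ, 0 ≤ x → x ≤ y → y ≤ ℓ → |g y - g x| ≤ 2 * (P - Pab x y) := by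
    intro x y hx hxy hy
    have h1 : |g (x + ℓ) - g y| ≤ 2 * Pab y (x + ℓ) := habs y (x + ℓ) (by linarith)
    rw [hgper x] at h1
    have h2 : Pab y (x + ℓ) = Pab y ℓ + Pab 0 x := by
      rw [← hPab_add y ℓ (x + ℓ)]
      congr 1
      simpa using hPab_shift 0 x
    have h3 : Pab y ℓ + Pab 0 x = P - Pab x y := by
      have := hPsplit (x := x) (y := y)
      linarith
    rw [h2, h3] at h1
    calc |g y - g x| = |g x - g y| := abs_sub_comm _ _
    _ ≤ 2 * (P - Pab x y) := h1
  -- minimum point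
  obtain ⟨s₀, hs₀mem, hs₀min⟩ :=
    (isCompact_Icc (a := (0:ℝ)) (b := ℓ)).exists_isMinOn
      (Set.nonempty_Icc.2 hℓ0) hgc.continuousOn
  set m : ℝ := g s₀ with hm
  have hm0 : 0 ≤ m := hg0 s₀
  -- sup bound : on Icc, g ≤ m + P
  have hsup : ∀ s ∈ Set.Icc (0:ℝ) ℓ, g s ≤ m + P := by
    intro s hs
    rcases le_total s₀ s with hc | hc
    · have h1 := habs s₀ s hc
      have h2 := habs2 s₀ s hs₀mem.1 hc hs.2
      have h3 : 0 ≤ Pab s₀ s := hPab_nonneg hc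
      have h4 := abs_le.1 h1
      have h5 := abs_le.1 h2
      by_cases hcase : Pab s₀ s ≤ P / 2
      · linarith [h4.2]
      · linarith [h5.2]
    · have h1 := habs s s₀ hc
      have h2 := habs2 s s₀ hs.1 hc hs₀mem.2
      have h4 := abs_le.1 h1
      have h5 := abs_le.1 h2
      by_cases hcase : Pab s s₀ ≤ P / 2
      · linarith [h4.1]
      · linarith [h5.1]
  -- m * ℓ ≤ E
  have hmE : m * ℓ ≤ E := by
    have h1 : (∫ _ in (0:ℝ)..ℓ, m) ≤ E :=
      intervalIntegral.integral_mono_on hℓ0 intervalIntegrable_const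
        (hgc.intervalIntegrable _ _) (fun x hx => hs₀min hx)
    simpa [mul_comm] using h1
  -- expansion of G
  have hGexp : G = (∫ s in (0:ℝ)..ℓ, (g s - m) ^ 2) + 2 * m * E - m ^ 2 * ℓ := by
    have h1 : ∀ s, g s ^ 2 = (g s - m) ^ 2 + (2 * m * g s - m ^ 2) := fun s => by ring
    rw [hG, intervalIntegral.integral_congr fun s _ => h1 s]
    rw [intervalIntegral.integral_add, intervalIntegral.integral_sub,
      intervalIntegral.integral_const_mul, intervalIntegral.integral_const]
    · simp only [smul_eq_mul, sub_zero]
      ring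
    · exact (continuous_const.mul hgc).intervalIntegrable _ _
    · exact intervalIntegrable_const
    · exact ((hgc.sub continuous_const).pow 2).intervalIntegrable _ _
    · exact ((continuous_const.mul hgc).sub continuous_const).intervalIntegrable _ _
  -- ∫ (g-m)^2 ≤ P * (E - m*ℓ)
  have hI2 : (∫ s in (0:ℝ)..ℓ, (g s - m) ^ 2) ≤ P * (E - m * ℓ) := by
    have hpt : ∀ s ∈ Set.Icc (0:ℝ) ℓ, (g s - m) ^ 2 ≤ P * (g s - m) := by
      intro s hs
      have h1 : 0 ≤ g s - m := sub_nonneg.2 (hs₀min hs)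
      have h2 : g s - m ≤ P := by have := hsup s hs; linarith
      nlinarith
    have hmono : (∫ s in (0:ℝ)..ℓ, (g s - m) ^ 2) ≤ ∫ s in (0:ℝ)..ℓ, P * (g s - m) :=
      intervalIntegral.integral_mono_on hℓ0
      (((hgc.sub continuous_const).pow 2).intervalIntegrable (μ := volume) _ _)
      ((continuous_const.mul (hgc.sub continuous_const)).intervalIntegrable (μ := volume) _ _)
      hpt
    have he : (∫ s in (0:ℝ)..ℓ, P * (g s - m)) = P * (E - m * ℓ) := by
      rw [intervalIntegral.integral_const_mul,
        intervalIntegral.integral_sub (hgc.intervalIntegrable _ _) intervalIntegrable_const,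
        intervalIntegral.integral_const]
      simp only [smul_eq_mul, sub_zero]
      ring
    rw [he] at hmono
    exact hmono
  have hGle : G ≤ P * E + m * (2 * E - P * ℓ) := by
    have hm2 : 0 ≤ m ^ 2 * ℓ := by positivity
    nlinarith [hGexp, hI2]
  -- P^2 ≤ E * F
  have hP2 : P ^ 2 ≤ E * F := by
    have hpt : ∀ s ∈ Set.Icc (0:ℝ) ℓ, |ip s| ≤ ‖f s‖ * ‖f' s‖ := fun s _ =>
      abs_real_inner_le_norm (f s) (f' s)
    have hmono : (∫ s in (0:ℝ)..ℓ, |ip s|) ≤ ∫ s in (0:ℝ)..ℓ, ‖f s‖ * ‖f' s‖ :=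
      intervalIntegral.integral_mono_on hℓ0
      (hipc.abs.intervalIntegrable (μ := volume) _ _)
      ((hfc.norm.mul hf'c.norm).intervalIntegrable (μ := volume) _ _) hpt
    have hcs := integral_CS hℓ0 hfc.norm hf'c.norm
    have hE' : (∫ s in (0:ℝ)..ℓ, ‖f s‖ ^ 2) = E := by
      apply intervalIntegral.integral_congr
      intro s _
      exact (real_inner_self_eq_norm_sq _).symm
    have hF' : (∫ s in (0:ℝ)..ℓ, ‖f' s‖ ^ 2) = F := by
      apply intervalIntegral.integral_congr
      intro s _
      exact (real_inner_self_eq_norm_sq _).symm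
    rw [hE', hF'] at hcs
    nlinarith [hP0, hmono, hcs]
  -- FTC for f
  have hfFTC : ∀ x y : ℝ, (∫ u in x..y, f' u) = f y - f x := fun x y =>
    integral_eq_sub_of_hasDerivAt (fun u _ => hf u) (hf'c.intervalIntegrable x y)
  -- nn and its interval additivity/shift
  set nn : ℝ → ℝ := fun u => ⟪f' u, f' u⟫ with hnn
  have hnnc : Continuous nn := hf'c.inner hf'c
  have hnn0 : ∀ u, 0 ≤ nn u := fun u => real_inner_self_nonneg
  set Nab : ℝ → ℝ → ℝ := fun x y => ∫ u in x..y, nn u with hNab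
  have hNabi : ∀ a b : ℝ, IntervalIntegrable nn volume a b :=
    fun a b => hnnc.intervalIntegrable a b
  have hNab_add : ∀ x y z : ℝ, Nab x y + Nab y z = Nab x z := fun x y z =>
    integral_add_adjacent_intervals (hNabi x y) (hNabi y z)
  have hNab_nonneg : ∀ {x y : ℝ}, x ≤ y → 0 ≤ Nab x y := fun {x y} h =>
    intervalIntegral.integral_nonneg h fun u _ => hnn0 u
  have hNab_shift : ∀ x y : ℝ, Nab (x + ℓ) (y + ℓ) = Nab x y := by
    intro x y
    rw [hNab]
    simp only
    rw [← intervalIntegral.integral_comp_add_right nn ℓ]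
    refine intervalIntegral.integral_congr fun u _ => ?_
    simp [hnn, hper' u]
  have hFeq : Nab 0 ℓ = F := rfl
  -- distance bound
  have hdist : ∀ x y : ℝ, 0 ≤ x → x ≤ y → y ≤ ℓ → ‖f y - f x‖ ^ 2 ≤ ℓ * F / 4 := by
    intro x y hx hxy hy
    set A : ℝ := Nab x y with hA
    have hA0 : 0 ≤ A := hNab_nonneg hxy
    have hFA : Nab y (x + ℓ) = F - A := by
      have h1 : Nab y ℓ + Nab ℓ (x + ℓ) = Nab y (x + ℓ) := hNab_add y ℓ (x + ℓ)
      have h2 : Nab ℓ (x + ℓ) = Nab 0 x := by simpa using hNab_shift 0 x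
      have h3 : Nab 0 x + Nab x y + Nab y ℓ = F := by
        rw [hNab_add, hNab_add]
      rw [h2] at h1
      linarith
    have hAF : A ≤ F := by
      have := hNab_nonneg (show y ≤ x + ℓ by linarith)
      rw [hFA] at this
      linarith
    -- first bound
    have hb1 : ‖f y - f x‖ ^ 2 ≤ (y - x) * A := by
      rw [← hfFTC x y]
      have h1 : ‖∫ u in x..y, f' u‖ ≤ ∫ u in x..y, ‖f' u‖ :=
        intervalIntegral.norm_integral_le_integral_norm hxy
      have h2 : (∫ u in x..y, ‖f' u‖) ^ 2 ≤
          (∫ u in x..y, (1:ℝ) ^ 2) * (∫ u in x..y, ‖f' u‖ ^ 2) := by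
        have := integral_CS hxy (continuous_const : Continuous fun _ : ℝ => (1:ℝ)) hf'c.norm
        simpa using this
      have h3 : (∫ u in x..y, (1:ℝ) ^ 2) = y - x := by simp
      have h4 : (∫ u in x..y, ‖f' u‖ ^ 2) = A := by
        refine intervalIntegral.integral_congr fun u _ => ?_
        exact (real_inner_self_eq_norm_sq _).symm
      rw [h3, h4] at h2
      have h5 : 0 ≤ ∫ u in x..y, ‖f' u‖ :=
        intervalIntegral.integral_nonneg hxy fun u _ => norm_nonneg _
      nlinarith [norm_nonneg (∫ u in x..y, f' u)]
    -- second bound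
    have hb2 : ‖f y - f x‖ ^ 2 ≤ (ℓ - (y - x)) * (F - A) := by
      have heq : f (x + ℓ) - f y = -(f y - f x) := by rw [hper x]; abel
      have h0 : ‖f y - f x‖ = ‖f (x + ℓ) - f y‖ := by rw [heq, norm_neg]
      rw [h0, ← hfFTC y (x + ℓ)]
      have hxyℓ : y ≤ x + ℓ := by linarith
      have h1 : ‖∫ u in y..(x + ℓ), f' u‖ ≤ ∫ u in y..(x + ℓ), ‖f' u‖ :=
        intervalIntegral.norm_integral_le_integral_norm hxyℓ
      have h2 : (∫ u in y..(x + ℓ), ‖f' u‖) ^ 2 ≤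
          (∫ u in y..(x + ℓ), (1:ℝ) ^ 2) * (∫ u in y..(x + ℓ), ‖f' u‖ ^ 2) := by
        have := integral_CS hxyℓ (continuous_const : Continuous fun _ : ℝ => (1:ℝ)) hf'c.norm
        simpa using this
      have h3 : (∫ u in y..(x + ℓ), (1:ℝ) ^ 2) = x + ℓ - y := by simp
      have h4 : (∫ u in y..(x + ℓ), ‖f' u‖ ^ 2) = F - A := by
        rw [← hFA]
        refine intervalIntegral.integral_congr fun u _ => ?_
        exact (real_inner_self_eq_norm_sq _).symm
      rw [h3, h4] at h2
      have h5 : 0 ≤ ∫ u in y..(x + ℓ), ‖f' u‖ :=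
        intervalIntegral.integral_nonneg hxyℓ fun u _ => norm_nonneg _
      have h6 : x + ℓ - y = ℓ - (y - x) := by ring
      rw [h6] at h2
      nlinarith [norm_nonneg (∫ u in y..(x + ℓ), f' u)]
    have hmin := min_quarter (d := y - x) (ℓ := ℓ) (A := A) (F := F)
      (by linarith) (by linarith) hA0 hAF
    calc ‖f y - f x‖ ^ 2 ≤ min ((y - x) * A) ((ℓ - (y - x)) * (F - A)) :=
          le_min hb1 hb2
    _ ≤ ℓ * F / 4 := hmin
  -- pointwise bound on g via mean zero
  have hptg : ∀ s ∈ Set.Icc (0:ℝ) ℓ, g s ≤ ℓ * F / 4 := by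
    intro s hs
    have hInt : (∫ σ in (0:ℝ)..ℓ, (f s - f σ)) = ℓ • f s := by
      rw [intervalIntegral.integral_sub intervalIntegrable_const
        (hfc.intervalIntegrable _ _), hmean, intervalIntegral.integral_const]
      simp
    have h1 : ‖(ℓ:ℝ) • f s‖ ≤ ∫ σ in (0:ℝ)..ℓ, ‖f s - f σ‖ := by
      rw [← hInt]
      exact intervalIntegral.norm_integral_le_integral_norm hℓ0
    have hcont : Continuous fun σ => ‖f s - f σ‖ := (continuous_const.sub hfc).norm
    have h2 : (∫ σ in (0:ℝ)..ℓ, ‖f s - f σ‖) ^ 2 ≤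
        (∫ σ in (0:ℝ)..ℓ, (1:ℝ) ^ 2) * (∫ σ in (0:ℝ)..ℓ, ‖f s - f σ‖ ^ 2) := by
      have := integral_CS hℓ0 (continuous_const : Continuous fun _ : ℝ => (1:ℝ)) hcont
      simpa using this
    have h3 : (∫ σ in (0:ℝ)..ℓ, (1:ℝ) ^ 2) = ℓ := by simp
    have h4 : (∫ σ in (0:ℝ)..ℓ, ‖f s - f σ‖ ^ 2) ≤ ℓ * (ℓ * F / 4) := by
      have hpt : ∀ σ ∈ Set.Icc (0:ℝ) ℓ, ‖f s - f σ‖ ^ 2 ≤ ℓ * F / 4 := by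
        intro σ hσ
        rcases le_total σ s with hc | hc
        · exact hdist σ s hσ.1 hc hs.2
        · rw [norm_sub_rev]
          exact hdist s σ hs.1 hc hσ.2
      have : (∫ σ in (0:ℝ)..ℓ, ‖f s - f σ‖ ^ 2) ≤ ∫ σ in (0:ℝ)..ℓ, ℓ * F / 4 :=
        intervalIntegral.integral_mono_on hℓ0
        ((hcont.pow 2).intervalIntegrable (μ := volume) _ _) intervalIntegrable_const hpt
      simp only [intervalIntegral.integral_const, smul_eq_mul, sub_zero] at this
      linarith
    have h5 : ℓ ^ 2 * g s ≤ ℓ ^ 2 * (ℓ * F / 4) := by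
      have hgnorm : g s = ‖f s‖ ^ 2 := real_inner_self_eq_norm_sq (f s)
      have hns : ‖(ℓ:ℝ) • f s‖ = ℓ * ‖f s‖ := by
        rw [norm_smul, Real.norm_eq_abs, abs_of_pos hℓ]
      have h6 : 0 ≤ ∫ σ in (0:ℝ)..ℓ, ‖f s - f σ‖ :=
        intervalIntegral.integral_nonneg hℓ0 fun σ _ => norm_nonneg _
      rw [hns] at h1
      rw [h3] at h2
      have h7 : (ℓ * ‖f s‖) ^ 2 ≤ (∫ σ in (0:ℝ)..ℓ, ‖f s - f σ‖) ^ 2 :=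
        pow_le_pow_left₀ (by positivity) h1 2
      have h8 : ℓ * (∫ σ in (0:ℝ)..ℓ, ‖f s - f σ‖ ^ 2) ≤ ℓ * (ℓ * (ℓ * F / 4)) :=
        mul_le_mul_of_nonneg_left h4 hℓ0
      calc ℓ ^ 2 * g s = (ℓ * ‖f s‖) ^ 2 := by rw [hgnorm]; ring
      _ ≤ (∫ σ in (0:ℝ)..ℓ, ‖f s - f σ‖) ^ 2 := h7
      _ ≤ ℓ * ∫ σ in (0:ℝ)..ℓ, ‖f s - f σ‖ ^ 2 := h2
      _ ≤ ℓ * (ℓ * (ℓ * F / 4)) := h8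
      _ = ℓ ^ 2 * (ℓ * F / 4) := by ring
    have := le_of_mul_le_mul_left h5 (by positivity : (0:ℝ) < ℓ ^ 2)
    exact this
  -- Poincaré
  have hEP : 4 * E ≤ ℓ ^ 2 * F := by
    have : (∫ s in (0:ℝ)..ℓ, g s) ≤ ∫ s in (0:ℝ)..ℓ, ℓ * F / 4 :=
      intervalIntegral.integral_mono_on hℓ0 (hgc.intervalIntegrable (μ := volume) _ _)
      intervalIntegrable_const hptg
    simp only [intervalIntegral.integral_const, smul_eq_mul, sub_zero] at this
    rw [hE]
    nlinarith [this]
  -- final case analysis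
  rcases le_or_gt (2 * E) (P * ℓ) with hc | hc
  · have hGPE : G ≤ P * E := by nlinarith [hGle, hm0]
    nlinarith [mul_le_mul hGPE hGPE hG0 (mul_nonneg hP0 hE0),
      mul_le_mul_of_nonneg_right hP2 (sq_nonneg E)]
  · have hmEl : m ≤ E / ℓ := (le_div_iff₀ hℓ).2 hmE
    have hfac : (0:ℝ) ≤ 2 * E - P * ℓ := by linarith
    have hGE2 : G ≤ 2 * E ^ 2 / ℓ := by
      have h1 : m * (2 * E - P * ℓ) ≤ (E / ℓ) * (2 * E - P * ℓ) :=
        mul_le_mul_of_nonneg_right hmEl hfac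
      have h2 : P * E + (E / ℓ) * (2 * E - P * ℓ) = 2 * E ^ 2 / ℓ := by
        field_simp
        ring
      linarith [hGle, h1, h2.le, h2.ge]
    have h1 : G ^ 2 ≤ (2 * E ^ 2 / ℓ) ^ 2 := by nlinarith [hG0, hGE2]
    have h2 : (2 * E ^ 2 / ℓ) ^ 2 ≤ E ^ 3 * F := by
      rw [div_pow, div_le_iff₀ (by positivity : (0:ℝ) < ℓ ^ 2)]
      nlinarith [mul_le_mul_of_nonneg_right hEP (pow_nonneg hE0 3)]
    linarith

end GN

/-! ### the key algebraic identity -/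

lemma key_identity (Uv Vv Wv Zv Qv : R3)
    (h1 : ⟪Uv, Uv⟫ = 1) (h2 : ⟪Uv, Vv⟫ = 0)
    (h3 : ⟪Uv, Wv⟫ = -⟪Vv, Vv⟫) (h4 : ⟪Uv, Zv⟫ = -(3 * ⟪Vv, Wv⟫)) :
    ⟪Wv, (cross3 Wv Wv + cross3 Vv Zv) + (cross3 Vv Zv + cross3 Uv Qv)⟫
      + ⟪(cross3 Wv Wv + cross3 Vv Zv) + (cross3 Vv Zv + cross3 Uv Qv), Wv⟫
      - 5 / 4 * ((2 : ℕ) * ⟪Vv, Vv⟫ ^ 1 *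
          (⟪Vv, cross3 Vv Wv + cross3 Uv Zv⟫ + ⟪cross3 Vv Wv + cross3 Uv Zv, Vv⟫)) =
    2 * (⟪Wv, cross3 Vv Zv + cross3 Uv Qv⟫ + ⟪Zv, cross3 Uv Zv⟫)
      + 3 * ((⟪Vv, Wv⟫ + ⟪Wv, Vv⟫) * ⟪Uv, cross3 Vv Wv⟫
        + ⟪Vv, Vv⟫ * (⟪Uv, cross3 Wv Wv + cross3 Vv Zv⟫ + ⟪Vv, cross3 Vv Wv⟫)) := by
  simp only [inner3, PiLp.add_apply, cross3_c0, cross3_c1, cross3_c2] at h1 h2 h3 h4 ⊢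
  linear_combination (2 * (Vv 0 * (Wv 1 * Zv 2 - Wv 2 * Zv 1) - Vv 1 * (Wv 0 * Zv 2 - Wv 2 * Zv 0) + Vv 2 * (Wv 0 * Zv 1 - Wv 1 * Zv 0))) * h1 - (2 * (Uv 0 * (Wv 1 * Zv 2 - Wv 2 * Zv 1) - Uv 1 * (Wv 0 * Zv 2 - Wv 2 * Zv 0) + Uv 2 * (Wv 0 * Zv 1 - Wv 1 * Zv 0))) * h2 + (2 * (Uv 0 * (Vv 1 * Zv 2 - Vv 2 * Zv 1) - Uv 1 * (Vv 0 * Zv 2 - Vv 2 * Zv 0) + Uv 2 * (Vv 0 * Zv 1 - Vv 1 * Zv 0))) * h3 - (2 * (Uv 0 * (Vv 1 * Wv 2 - Vv 2 * Wv 1) - Uv 1 * (Vv 0 * Wv 2 - Vv 2 * Wv 0) + Uv 2 * (Vv 0 * Wv 1 - Vv 1 * Wv 0))) * h4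

lemma inner_cross_ab_b (a b : R3) : ⟪b, cross3 a b⟫ = 0 := by
  simp only [inner3, cross3_c0, cross3_c1, cross3_c2]; ring

/-! ### Statement 15 -/

set_option maxHeartbeats 4000000 in
/-- Corollary A.2: a priori `H²` bound for Schrödinger maps. -/
theorem stmt15
    (ℓ : ℝ) (hℓ : 0 < ℓ)
    (u : ℝ → ℝ → R3)
    (hu : ContDiff ℝ (⊤ : ℕ∞) (fun p : ℝ × ℝ => u p.1 p.2))
    (hper : ∀ t s : ℝ, u t (s + ℓ) = u t s)
    (hsph : ∀ t s : ℝ, ‖u t s‖ = 1)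
    (heq : ∀ t s : ℝ,
      deriv (fun τ => u τ s) t =
        deriv (fun σ => cross3 (u t σ) (deriv (u t) σ)) s) :
    ∀ t : ℝ,
      (∫ s in (0:ℝ)..ℓ, ‖deriv (deriv (u t)) s‖ ^ 2) ≤
        4 * (∫ s in (0:ℝ)..ℓ, ‖deriv (deriv (u 0)) s‖ ^ 2)
          + 2 * (∫ s in (0:ℝ)..ℓ, ‖deriv (u 0) s‖ ^ 2) ^ 3 := by
  intro t
  have hℓ0 : (0:ℝ) ≤ ℓ := hℓ.le
  set U : ℝ × ℝ → R3 := fun p => u p.1 p.2 with hUdef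
  have hUsm : ContDiff ℝ (⊤ : ℕ∞) U := hu
  set V : ℝ × ℝ → R3 := fun p => fderiv ℝ U p (0, 1) with hVdef
  set W : ℝ × ℝ → R3 := fun p => fderiv ℝ V p (0, 1) with hWdef
  set Z : ℝ × ℝ → R3 := fun p => fderiv ℝ W p (0, 1) with hZdef
  set Q : ℝ × ℝ → R3 := fun p => fderiv ℝ Z p (0, 1) with hQdef
  set T : ℝ × ℝ → R3 := fun p => fderiv ℝ U p (1, 0) with hTdef
  have hVsm : ContDiff ℝ (⊤ : ℕ∞) V := contDiff_pfderiv hUsm _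
  have hWsm : ContDiff ℝ (⊤ : ℕ∞) W := contDiff_pfderiv hVsm _
  have hZsm : ContDiff ℝ (⊤ : ℕ∞) Z := contDiff_pfderiv hWsm _
  have hQsm : ContDiff ℝ (⊤ : ℕ∞) Q := contDiff_pfderiv hZsm _
  have hTsm : ContDiff ℝ (⊤ : ℕ∞) T := contDiff_pfderiv hUsm _
  set DsT : ℝ × ℝ → R3 := fun p => fderiv ℝ T p (0, 1) with hDsTdef
  set DssT : ℝ × ℝ → R3 := fun p => fderiv ℝ DsT p (0, 1) with hDssTdef
  have hDsTsm : ContDiff ℝ (⊤ : ℕ∞) DsT := contDiff_pfderiv hTsm _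
  have hDssTsm : ContDiff ℝ (⊤ : ℕ∞) DssT := contDiff_pfderiv hDsTsm _
  -- sectional derivatives in the s-direction
  have HUs : ∀ a s, HasDerivAt (fun σ => U (a, σ)) (V (a, s)) s :=
    fun a s => hasDerivAt_sect2 (hUsm.differentiable (by simp)) a s
  have HVs : ∀ a s, HasDerivAt (fun σ => V (a, σ)) (W (a, s)) s :=
    fun a s => hasDerivAt_sect2 (hVsm.differentiable (by simp)) a s
  have HWs : ∀ a s, HasDerivAt (fun σ => W (a, σ)) (Z (a, s)) s :=
    fun a s => hasDerivAt_sect2 (hWsm.differentiable (by simp)) a s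
  have HZs : ∀ a s, HasDerivAt (fun σ => Z (a, σ)) (Q (a, s)) s :=
    fun a s => hasDerivAt_sect2 (hZsm.differentiable (by simp)) a s
  have HTs : ∀ a s, HasDerivAt (fun σ => T (a, σ)) (DsT (a, s)) s :=
    fun a s => hasDerivAt_sect2 (hTsm.differentiable (by simp)) a s
  have HDsTs : ∀ a s, HasDerivAt (fun σ => DsT (a, σ)) (DssT (a, s)) s :=
    fun a s => hasDerivAt_sect2 (hDsTsm.differentiable (by simp)) a s
  have HUt : ∀ a s, HasDerivAt (fun τ => U (τ, s)) (T (a, s)) a :=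
    fun a s => hasDerivAt_sect1 (hUsm.differentiable (by simp)) a s
  -- bridges to the statement derivatives
  have hv : ∀ a s, deriv (u a) s = V (a, s) := fun a s => (HUs a s).deriv
  have hv' : ∀ a, deriv (u a) = fun s => V (a, s) := fun a => funext (hv a)
  have hw : ∀ a s, deriv (deriv (u a)) s = W (a, s) := by
    intro a s; rw [hv' a]; exact (HVs a s).deriv
  -- the equation : T = U × W
  have hT : ∀ a s, T (a, s) = cross3 (U (a, s)) (W (a, s)) := by
    intro a s
    have h1 : deriv (fun τ => u τ s) a = T (a, s) := (HUt a s).deriv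
    have h2 : (fun σ => cross3 (u a σ) (deriv (u a) σ))
        = fun σ => cross3 (U (a, σ)) (V (a, σ)) := by
      funext σ; rw [hv' a]
    have h3 : deriv (fun σ => cross3 (u a σ) (deriv (u a) σ)) s
        = cross3 (V (a, s)) (V (a, s)) + cross3 (U (a, s)) (W (a, s)) := by
      rw [h2]; exact (hasDerivAt_cross (HUs a s) (HVs a s)).deriv
    rw [← h1, heq a s, h3, cross3_self, zero_add]
  -- time derivatives of V and W sections (Clairaut)
  have HVt : ∀ a s, HasDerivAt (fun τ => V (τ, s)) (DsT (a, s)) a := by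
    intro a s
    have h := hasDerivAt_sect1 (hVsm.differentiable (by simp)) a s
    have e : fderiv ℝ V (a, s) (1, 0) = DsT (a, s) :=
      pfderiv_comm hUsm (0, 1) (1, 0) (a, s)
    rwa [e] at h
  have hVT : (fun q => fderiv ℝ V q (1, 0)) = DsT := by
    funext q
    exact pfderiv_comm hUsm (0, 1) (1, 0) q
  have HWt : ∀ a s, HasDerivAt (fun τ => W (τ, s)) (DssT (a, s)) a := by
    intro a s
    have h := hasDerivAt_sect1 (hWsm.differentiable (by simp)) a s
    have e : fderiv ℝ W (a, s) (1, 0) = DssT (a, s) := by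
      calc fderiv ℝ W (a, s) (1, 0)
          = fderiv ℝ (fun q => fderiv ℝ V q (1, 0)) (a, s) (0, 1) :=
            pfderiv_comm hVsm (0, 1) (1, 0) (a, s)
      _ = fderiv ℝ DsT (a, s) (0, 1) := by rw [hVT]
      _ = DssT (a, s) := rfl
    rwa [e] at h
  -- values of DsT, DssT
  have hDsT : ∀ a s, DsT (a, s)
      = cross3 (V (a, s)) (W (a, s)) + cross3 (U (a, s)) (Z (a, s)) := by
    intro a s
    refine (HTs a s).unique ?_
    have hfun : (fun σ => T (a, σ)) = fun σ => cross3 (U (a, σ)) (W (a, σ)) :=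
      funext fun σ => hT a σ
    rw [hfun]
    exact hasDerivAt_cross (HUs a s) (HWs a s)
  have hDssT : ∀ a s, DssT (a, s) =
      (cross3 (W (a, s)) (W (a, s)) + cross3 (V (a, s)) (Z (a, s)))
      + (cross3 (V (a, s)) (Z (a, s)) + cross3 (U (a, s)) (Q (a, s))) := by
    intro a s
    refine (HDsTs a s).unique ?_
    have hfun : (fun σ => DsT (a, σ))
        = fun σ => cross3 (V (a, σ)) (W (a, σ)) + cross3 (U (a, σ)) (Z (a, σ)) :=
      funext fun σ => hDsT a σ
    rw [hfun]
    exact (hasDerivAt_cross (HVs a s) (HWs a s)).add (hasDerivAt_cross (HUs a s) (HZs a s))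
  -- sphere constraints
  have hsph' : ∀ p : ℝ × ℝ, ⟪U p, U p⟫ = 1 := by
    intro p
    have h := hsph p.1 p.2
    rw [real_inner_self_eq_norm_sq]
    rw [show U p = u p.1 p.2 from rfl, h]
    norm_num
  have c1 : ∀ a s, ⟪U (a, s), V (a, s)⟫ = 0 := by
    intro a s
    have h1 := (HUs a s).inner (𝕜 := ℝ) (HUs a s)
    have h2 : (fun σ => ⟪U (a, σ), U (a, σ)⟫) = fun _ => (1:ℝ) :=
      funext fun σ => hsph' (a, σ)
    rw [h2] at h1
    have h3 := h1.unique (hasDerivAt_const s 1)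
    have h4 := real_inner_comm (U (a, s)) (V (a, s))
    linarith
  have c2 : ∀ a s, ⟪U (a, s), W (a, s)⟫ = -⟪V (a, s), V (a, s)⟫ := by
    intro a s
    have h1 := (HUs a s).inner (𝕜 := ℝ) (HVs a s)
    have h2 : (fun σ => ⟪U (a, σ), V (a, σ)⟫) = fun _ => (0:ℝ) :=
      funext fun σ => c1 a σ
    rw [h2] at h1
    have h3 := h1.unique (hasDerivAt_const s 0)
    have h4 := real_inner_comm (V (a, s)) (U (a, s))
    linarith
  have c3 : ∀ a s, ⟪U (a, s), Z (a, s)⟫ = -(3 * ⟪V (a, s), W (a, s)⟫) := by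
    intro a s
    have h1 : HasDerivAt (fun σ => ⟪U (a, σ), W (a, σ)⟫ + ⟪V (a, σ), V (a, σ)⟫)
        (⟪U (a, s), Z (a, s)⟫ + ⟪V (a, s), W (a, s)⟫
          + (⟪V (a, s), W (a, s)⟫ + ⟪W (a, s), V (a, s)⟫)) s :=
      ((HUs a s).inner (𝕜 := ℝ) (HWs a s)).add ((HVs a s).inner (𝕜 := ℝ) (HVs a s))
    have h2 : (fun σ => ⟪U (a, σ), W (a, σ)⟫ + ⟪V (a, σ), V (a, σ)⟫) = fun _ => (0:ℝ) := by
      funext σ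
      rw [c2 a σ]; ring
    rw [h2] at h1
    have h3 := h1.unique (hasDerivAt_const s 0)
    have h4 := real_inner_comm (V (a, s)) (W (a, s))
    have h5 := real_inner_comm (W (a, s)) (V (a, s))
    linarith
  -- periodicity in s
  have hUper : ∀ a s, U (a, s + ℓ) = U (a, s) := fun a s => hper a s
  have per_step : ∀ (Fc Gc : ℝ × ℝ → R3),
      (∀ a s, HasDerivAt (fun σ => Fc (a, σ)) (Gc (a, s)) s) →
      (∀ a s, Fc (a, s + ℓ) = Fc (a, s)) → ∀ a s, Gc (a, s + ℓ) = Gc (a, s) := by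
    intro Fc Gc hD hP a s
    have h1 : HasDerivAt (fun σ => Fc (a, σ + ℓ)) (Gc (a, s + ℓ)) s := by
      simpa using (hD a (s + ℓ)).comp_add_const s ℓ
    have h2 : (fun σ : ℝ => Fc (a, σ + ℓ)) = fun σ => Fc (a, σ) := funext fun σ => hP a σ
    rw [h2] at h1
    exact h1.unique (hD a s)
  have hVper := per_step U V HUs hUper
  have hWper := per_step V W HVs hVper
  have hZper := per_step W Z HWs hWper
  have hTper : ∀ a s, T (a, s + ℓ) = T (a, s) := by
    intro a s; rw [hT, hT, hUper, hWper]
  -- continuity of sections, helper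
  have sect_cont : ∀ (Fc : ℝ × ℝ → R3), ContDiff ℝ (⊤ : ℕ∞) Fc → ∀ a : ℝ,
      Continuous fun s => Fc (a, s) := fun Fc hFc a =>
    hFc.continuous.comp (continuous_const.prodMk continuous_id)
  -- conservation of EE
  set ΦE : ℝ × ℝ → ℝ := fun p => ⟪V p, V p⟫ with hΦEdef
  have hΦEsm : ContDiff ℝ (⊤ : ℕ∞) ΦE := hVsm.inner ℝ hVsm
  set EE : ℝ → ℝ := fun a => ∫ s in (0:ℝ)..ℓ, ΦE (a, s) with hEEdef
  have hEEd : ∀ a, HasDerivAt EE 0 a := by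
    intro a
    have h0 := hasDerivAt_parint hΦEsm 0 ℓ a
    have key : ∀ s, HasDerivAt (fun σ => 2 * ⟪V (a, σ), T (a, σ)⟫)
        (fderiv ℝ ΦE (a, s) (1, 0)) s := by
      intro s
      have h2 := ((HVs a s).inner (𝕜 := ℝ) (HTs a s)).const_mul (2:ℝ)
      have hfd : fderiv ℝ ΦE (a, s) (1, 0)
          = ⟪V (a, s), DsT (a, s)⟫ + ⟪DsT (a, s), V (a, s)⟫ := by
        have ha := hasDerivAt_sect1 (hΦEsm.differentiable (by simp)) a s
        have hb := (HVt a s).inner (𝕜 := ℝ) (HVt a s)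
        exact ha.unique hb
      have hWT : ⟪W (a, s), T (a, s)⟫ = 0 := by
        rw [hT a s]; exact inner_cross_ab_b _ _
      have e : 2 * (⟪V (a, s), DsT (a, s)⟫ + ⟪W (a, s), T (a, s)⟫)
          = fderiv ℝ ΦE (a, s) (1, 0) := by
        rw [hfd, hWT, real_inner_comm (DsT (a, s)) (V (a, s))]; ring
      rwa [e] at h2
    have hcont : Continuous fun s => fderiv ℝ ΦE (a, s) (1, 0) :=
      (contDiff_pfderiv hΦEsm (1, 0)).continuous.comp (continuous_const.prodMk continuous_id)
    have hzero : (∫ s in (0:ℝ)..ℓ, fderiv ℝ ΦE (a, s) (1, 0)) = 0 := by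
      rw [integral_eq_sub_of_hasDerivAt (fun s _ => key s) (hcont.intervalIntegrable 0 ℓ)]
      have : 2 * ⟪V (a, ℓ), T (a, ℓ)⟫ = 2 * ⟪V (a, 0), T (a, 0)⟫ := by
        have e0 : (ℓ:ℝ) = 0 + ℓ := by ring
        rw [e0, hVper, hTper]
      rw [this, sub_self]
    rwa [hzero] at h0
  have hEEconst : ∀ a b : ℝ, EE a = EE b :=
    is_const_of_deriv_eq_zero
      (fun a => (hEEd a).differentiableAt) (fun a => (hEEd a).deriv)
  -- conservation of KK
  set ΦK : ℝ × ℝ → ℝ := fun p => ⟪W p, W p⟫ - 5 / 4 * (⟪V p, V p⟫) ^ 2 with hΦKdef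
  have hΦKsm : ContDiff ℝ (⊤ : ℕ∞) ΦK :=
    (hWsm.inner ℝ hWsm).sub (contDiff_const.mul ((hVsm.inner ℝ hVsm).pow 2))
  set KK : ℝ → ℝ := fun a => ∫ s in (0:ℝ)..ℓ, ΦK (a, s) with hKKdef
  have hKKd : ∀ a, HasDerivAt KK 0 a := by
    intro a
    have h0 := hasDerivAt_parint hΦKsm 0 ℓ a
    have key : ∀ s, HasDerivAt
        (fun σ => 2 * ⟪W (a, σ), cross3 (U (a, σ)) (Z (a, σ))⟫
          + 3 * (⟪V (a, σ), V (a, σ)⟫ * ⟪U (a, σ), cross3 (V (a, σ)) (W (a, σ))⟫))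
        (fderiv ℝ ΦK (a, s) (1, 0)) s := by
      intro s
      have hcUZ := hasDerivAt_cross (HUs a s) (HZs a s)
      have hWcUZ := (HWs a s).inner (𝕜 := ℝ) hcUZ
      have hcVW := hasDerivAt_cross (HVs a s) (HWs a s)
      have hUcVW := (HUs a s).inner (𝕜 := ℝ) hcVW
      have hVV := (HVs a s).inner (𝕜 := ℝ) (HVs a s)
      have hψ := ((hWcUZ.const_mul (2:ℝ))).add ((hVV.mul hUcVW).const_mul (3:ℝ))
      have hfd : fderiv ℝ ΦK (a, s) (1, 0)
          = (⟪W (a, s), DssT (a, s)⟫ + ⟪DssT (a, s), W (a, s)⟫)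
            - 5 / 4 * ((2 : ℕ) * ⟪V (a, s), V (a, s)⟫ ^ 1
              * (⟪V (a, s), DsT (a, s)⟫ + ⟪DsT (a, s), V (a, s)⟫)) := by
        have ha := hasDerivAt_sect1 (hΦKsm.differentiable (by simp)) a s
        have hb := ((HWt a s).inner (𝕜 := ℝ) (HWt a s)).sub
          ((((HVt a s).inner (𝕜 := ℝ) (HVt a s)).pow 2).const_mul (5/4 : ℝ))
        exact ha.unique hb
      have eid : 2 * (⟪W (a, s), cross3 (V (a, s)) (Z (a, s)) + cross3 (U (a, s)) (Q (a, s))⟫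
            + ⟪Z (a, s), cross3 (U (a, s)) (Z (a, s))⟫)
          + 3 * ((⟪V (a, s), W (a, s)⟫ + ⟪W (a, s), V (a, s)⟫)
              * ⟪U (a, s), cross3 (V (a, s)) (W (a, s))⟫
            + ⟪V (a, s), V (a, s)⟫
              * (⟪U (a, s), cross3 (W (a, s)) (W (a, s)) + cross3 (V (a, s)) (Z (a, s))⟫
                + ⟪V (a, s), cross3 (V (a, s)) (W (a, s))⟫))
          = fderiv ℝ ΦK (a, s) (1, 0) := by
        rw [hfd, hDssT a s, hDsT a s]
        exact (key_identity (U (a, s)) (V (a, s)) (W (a, s)) (Z (a, s)) (Q (a, s))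
          (hsph' (a, s)) (c1 a s) (c2 a s) (c3 a s)).symm
      rwa [eid] at hψ
    have hcont : Continuous fun s => fderiv ℝ ΦK (a, s) (1, 0) :=
      (contDiff_pfderiv hΦKsm (1, 0)).continuous.comp (continuous_const.prodMk continuous_id)
    have hzero : (∫ s in (0:ℝ)..ℓ, fderiv ℝ ΦK (a, s) (1, 0)) = 0 := by
      rw [integral_eq_sub_of_hasDerivAt (fun s _ => key s) (hcont.intervalIntegrable 0 ℓ)]
      have e0 : (ℓ:ℝ) = 0 + ℓ := by ring
      have heq2 : (2 * ⟪W (a, ℓ), cross3 (U (a, ℓ)) (Z (a, ℓ))⟫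
            + 3 * (⟪V (a, ℓ), V (a, ℓ)⟫ * ⟪U (a, ℓ), cross3 (V (a, ℓ)) (W (a, ℓ))⟫))
          = (2 * ⟪W (a, 0), cross3 (U (a, 0)) (Z (a, 0))⟫
            + 3 * (⟪V (a, 0), V (a, 0)⟫ * ⟪U (a, 0), cross3 (V (a, 0)) (W (a, 0))⟫)) := by
        rw [e0, hUper, hVper, hWper, hZper]
      rw [heq2, sub_self]
    rwa [hzero] at h0
  have hKKconst : ∀ a b : ℝ, KK a = KK b :=
    is_const_of_deriv_eq_zero
      (fun a => (hKKd a).differentiableAt) (fun a => (hKKd a).deriv)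
  -- quantities at fixed times
  set FF : ℝ → ℝ := fun a => ∫ s in (0:ℝ)..ℓ, ⟪W (a, s), W (a, s)⟫ with hFFdef
  set GG : ℝ → ℝ := fun a => ∫ s in (0:ℝ)..ℓ, (⟪V (a, s), V (a, s)⟫) ^ 2 with hGGdef
  have sect_cont : ∀ (Fc : ℝ × ℝ → R3), ContDiff ℝ (⊤ : ℕ∞) Fc → ∀ a : ℝ,
      Continuous fun s => Fc (a, s) := fun Fc hFc a =>
    hFc.continuous.comp (continuous_const.prodMk continuous_id)
  have hsplit : ∀ a, KK a = FF a - 5 / 4 * GG a := by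
    intro a
    have hint1 : IntervalIntegrable (fun s => ⟪W (a, s), W (a, s)⟫) volume 0 ℓ :=
      ((sect_cont W hWsm a).inner (sect_cont W hWsm a)).intervalIntegrable 0 ℓ
    have hint2 : IntervalIntegrable
        (fun s => 5 / 4 * (⟪V (a, s), V (a, s)⟫) ^ 2) volume 0 ℓ :=
      (continuous_const.mul
        (((sect_cont V hVsm a).inner (sect_cont V hVsm a)).pow 2)).intervalIntegrable 0 ℓ
    show (∫ s in (0:ℝ)..ℓ, ΦK (a, s))
        = (∫ s in (0:ℝ)..ℓ, ⟪W (a, s), W (a, s)⟫)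
          - 5 / 4 * ∫ s in (0:ℝ)..ℓ, (⟪V (a, s), V (a, s)⟫) ^ 2
    rw [← intervalIntegral.integral_const_mul, ← intervalIntegral.integral_sub hint1 hint2]
  have hFFnn : ∀ a, 0 ≤ FF a := fun a =>
    intervalIntegral.integral_nonneg hℓ0 fun s _ => real_inner_self_nonneg
  have hGGnn : ∀ a, 0 ≤ GG a := fun a =>
    intervalIntegral.integral_nonneg hℓ0 fun s _ => sq_nonneg _
  have hEEnn : ∀ a, 0 ≤ EE a := fun a =>
    intervalIntegral.integral_nonneg hℓ0 fun s _ => real_inner_self_nonneg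
  -- mean zero of V (t, ·)
  have hmz : (∫ s in (0:ℝ)..ℓ, V (t, s)) = 0 := by
    rw [integral_eq_sub_of_hasDerivAt (fun s _ => HUs t s)
      ((sect_cont V hVsm t).intervalIntegrable 0 ℓ)]
    have e0 : (ℓ:ℝ) = 0 + ℓ := by ring
    rw [e0, hUper, sub_self]
  -- GN inequality at time t
  have hGN : (GG t) ^ 2 ≤ (EE t) ^ 3 * FF t :=
    GN_ineq hℓ (f := fun s => V (t, s)) (f' := fun s => W (t, s))
      (HVs t) (sect_cont W hWsm t) (fun s => hVper t s) hmz
  -- conservation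
  have hEt : EE t = EE 0 := hEEconst t 0
  have hKt : KK t = KK 0 := hKKconst t 0
  have hFt : FF t - 5 / 4 * GG t = FF 0 - 5 / 4 * GG 0 := by
    rw [← hsplit t, ← hsplit 0, hKt]
  have h54 : 5 / 4 * GG t ≤ FF t / 2 + 25 / 32 * (EE t) ^ 3 := by
    apply le_add_of_sq_le_four_mul (by linarith [hFFnn t])
      (by
        have := pow_nonneg (hEEnn t) 3
        linarith)
    nlinarith [hGN]
  have final : FF t ≤ 4 * FF 0 + 2 * (EE 0) ^ 3 := by
    have h1 : FF t ≤ FF 0 + 5 / 4 * GG t := by nlinarith [hGGnn 0, hFt]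
    have h3 : FF t ≤ 2 * FF 0 + 25 / 16 * (EE t) ^ 3 := by linarith
    have h4 : (EE t) ^ 3 = (EE 0) ^ 3 := by rw [hEt]
    nlinarith [hFFnn 0, pow_nonneg (hEEnn 0) 3]
  -- bridge to the statement
  have e1 : (∫ s in (0:ℝ)..ℓ, ‖deriv (deriv (u t)) s‖ ^ 2) = FF t := by
    apply intervalIntegral.integral_congr
    intro s _
    show ‖deriv (deriv (u t)) s‖ ^ 2 = ⟪W (t, s), W (t, s)⟫
    rw [hw t s]
    exact (real_inner_self_eq_norm_sq _).symm
  have e2 : (∫ s in (0:ℝ)..ℓ, ‖deriv (deriv (u 0)) s‖ ^ 2) = FF 0 := by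
    apply intervalIntegral.integral_congr
    intro s _
    show ‖deriv (deriv (u 0)) s‖ ^ 2 = ⟪W (0, s), W (0, s)⟫
    rw [hw 0 s]
    exact (real_inner_self_eq_norm_sq _).symm
  have e3 : (∫ s in (0:ℝ)..ℓ, ‖deriv (u 0) s‖ ^ 2) = EE 0 := by
    apply intervalIntegral.integral_congr
    intro s _
    show ‖deriv (u 0) s‖ ^ 2 = ΦE (0, s)
    rw [hv 0 s]
    exact (real_inner_self_eq_norm_sq _).symm
  rw [e1, e2, e3]
  exact final
end
end
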